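/- arXiv:2202.02100 — 10 statements merged into one kernel-verified Lean document; each statement's English description precedes it below -/
import Mathlib

section
/- Let f ∈ ℤ[x] be a monic polynomial. Suppose there exists a positive integer N such that for every prime p ≥ N one has f(p) ∣ f(p^p) (divisibility in ℤ). Then there exist a nonnegative integer e₀, a positive integer m, positive integers d₁,…,d_m and nonnegative integers e₁,…,e_m such that f(x) = x^{e₀} · Φ_{d₁}(x)^{e₁} · Φ_{d₂}(x)^{e₂} ⋯ Φ_{d_m}(x)^{e_m}, where Φ_d denotes the d-th cyclotomic polynomial. -/
/-!
Let `d = deg f` and `L = (2d²)!`. It suffices that every monic irreducible factor `g` of `f`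
divides `X (X^L - 1) = X ∏_{k ∣ L} Φ_k`. Otherwise `g` and `X (X^L - 1)` are coprime over `ℚ`, so a
nonzero integer `n` lies in the ideal they generate in `ℤ[X]`. Take a prime `q > |n|, |g(0)|` with
`q ∣ g(s)` for some `s` (Schur); then `x = s mod q` is a nonzero root of `f mod q`, of order `t`.
For `j` coprime to `t`, Dirichlet gives a large prime `p` with `p ≡ s (mod q)` and `p ≡ j (mod t)`,
so `q ∣ f(p) ∣ f(p^p)` and `p^p ≡ s^j (mod q)`: every primitive `t`-th root of unity is a root of
`f mod q`. Hence `φ(t) ≤ d`, so `t ≤ 2φ(t)² ≤ 2d²` divides `L`, `x^L = 1`, and `q ∣ n`, which is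
absurd.
-/

open Polynomial
open scoped Nat

namespace Nat

theorem le_two_mul_totient_sq_and_le_totient_sq_of_odd (n : ℕ) :
    n ≤ 2 * φ n ^ 2 ∧ (Odd n → n ≤ φ n ^ 2) := by
  induction n using Nat.recOnPosPrimePosCoprime with
  | zero => simp
  | one => simp
  | prime_pow p k hp hk =>
    obtain ⟨r, rfl⟩ : ∃ r, p = r + 2 := ⟨p - 2, by have := hp.two_le; omega⟩
    obtain ⟨a, rfl⟩ : ∃ a, k = a + 1 := ⟨k - 1, by omega⟩
    have htot : φ ((r + 2) ^ (a + 1)) = (r + 2) ^ a * (r + 1) := by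
      simp [totient_prime_pow_succ hp]
    have hpow : (r + 2) ^ a ≤ ((r + 2) ^ a) ^ 2 := le_self_pow two_ne_zero _
    rw [htot, pow_succ, mul_pow]
    refine ⟨?_, fun hodd => ?_⟩
    · have : r + 2 ≤ 2 * (r + 1) ^ 2 := by nlinarith
      nlinarith [Nat.mul_le_mul hpow this]
    · have hr : r ≠ 0 := by
        rintro rfl
        exact Nat.not_even_iff_odd.mpr hodd (even_two.mul_left _)
      have : r + 2 ≤ (r + 1) ^ 2 := by nlinarith [Nat.one_le_iff_ne_zero.mpr hr]
      exact Nat.mul_le_mul hpow this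
  | coprime a b ha hb hab iha ihb =>
    rw [totient_mul hab, mul_pow]
    have hodd_or : Odd a ∨ Odd b := by
      by_contra! h
      simp only [Nat.not_odd_iff_even] at h
      have := Nat.dvd_gcd h.1.two_dvd h.2.two_dvd
      rw [hab] at this
      omega
    refine ⟨?_, fun hodd => ?_⟩
    · rcases hodd_or with hao | hbo
      · nlinarith [iha.2 hao, ihb.1]
      · nlinarith [iha.1, ihb.2 hbo]
    · exact Nat.mul_le_mul (iha.2 (Nat.odd_mul.mp hodd).1) (ihb.2 (Nat.odd_mul.mp hodd).2)

theorem le_two_mul_totient_sq (n : ℕ) : n ≤ 2 * φ n ^ 2 :=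
  (le_two_mul_totient_sq_and_le_totient_sq_of_odd n).1

end Nat

theorem Polynomial.totient_orderOf_le_natDegree {R : Type*} [CommRing R] [IsDomain R]
    {F : R[X]} (hF : F ≠ 0) {x : R} (hroots : ∀ j : ℕ, j.Coprime (orderOf x) → F.IsRoot (x ^ j)) :
    φ (orderOf x) ≤ F.natDegree := by
  classical
  set t := orderOf x
  rcases Nat.eq_zero_or_pos t with ht | ht
  · simp [t, ht]
  have : NeZero t := ⟨ht.ne'⟩
  have hx : IsPrimitiveRoot x t := IsPrimitiveRoot.orderOf x
  have hsub : primitiveRoots t R ⊆ F.roots.toFinset := by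
    intro y hy
    have hy' : IsPrimitiveRoot y t := (mem_primitiveRoots ht).mp hy
    obtain ⟨i, -, rfl⟩ := hx.eq_pow_of_pow_eq_one hy'.pow_eq_one
    rw [Multiset.mem_toFinset, mem_roots hF]
    exact hroots i ((hx.pow_iff_coprime ht i).mp hy')
  calc φ t = (primitiveRoots t R).card := hx.card_primitiveRoots.symm
    _ ≤ F.roots.toFinset.card := Finset.card_le_card hsub
    _ ≤ F.roots.card := Multiset.toFinset_card_le _
    _ ≤ F.natDegree := card_roots' F

theorem Nat.exists_prime_gt_and_eq_mod_and_eq_mod {q t : ℕ} [NeZero q] [NeZero t]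
    (hqt : q.Coprime t) {a : ZMod q} {b : ZMod t} (ha : IsUnit a) (hb : IsUnit b) (n : ℕ) :
    ∃ p > n, p.Prime ∧ (p : ZMod q) = a ∧ (p : ZMod t) = b := by
  let e := ZMod.chineseRemainder hqt
  have hunit : IsUnit (e.symm (a, b)) := (Prod.isUnit_iff.mpr ⟨ha, hb⟩).map e.symm
  obtain ⟨p, hpn, hp, hpab⟩ := Nat.forall_exists_prime_gt_and_eq_mod hunit n
  have : ((p : ZMod q), (p : ZMod t)) = (a, b) := by
    rw [← e.apply_symm_apply (a, b), ← hpab, map_natCast]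
    rfl
  exact ⟨p, hpn, hp, (Prod.ext_iff.mp this).1, (Prod.ext_iff.mp this).2⟩

theorem Polynomial.exists_prime_gt_dvd_eval {g : ℤ[X]} (hg : g.natDegree ≠ 0) (M : ℕ) :
    ∃ q > M, q.Prime ∧ ∃ s : ℤ, (q : ℤ) ∣ g.eval s := by
  set c := g.eval 0
  rcases eq_or_ne c 0 with hc | hc
  · obtain ⟨q, hMq, hq⟩ := Nat.exists_infinite_primes (M + 1)
    exact ⟨q, hMq, hq, 0, by rw [show g.eval 0 = 0 from hc]; exact dvd_zero _⟩
  have hK : c * M ! ≠ 0 := mul_ne_zero hc (by positivity)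
  have hQ : (g - C c) * (g + C c) ≠ 0 := by
    refine mul_ne_zero (fun h => hg ?_) (fun h => hg ?_)
    · rw [← natDegree_sub_C (a := c), h, natDegree_zero]
    · rw [← natDegree_add_C (a := c), h, natDegree_zero]
  obtain ⟨_, ⟨y, rfl⟩, hy⟩ := (Set.infinite_range_of_injective
    (mul_right_injective₀ hK)).exists_notMem_finset ((g - C c) * (g + C c)).roots.toFinset
  rw [Multiset.mem_toFinset, mem_roots hQ, IsRoot, eval_mul, eval_sub, eval_add, eval_C,
    mul_eq_zero, sub_eq_zero, add_eq_zero_iff_eq_neg, not_or] at hy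
  obtain ⟨w, hw⟩ : c * M ! * y ∣ g.eval (c * M ! * y) - c := by
    simpa using sub_dvd_eval_sub (c * M ! * y) 0 g
  -- `g (c * M ! * y) = c * A` with `A ≡ 1 [ZMOD M !]`, so every prime factor of `A` exceeds `M`.
  set A := 1 + M ! * y * w
  have hgA : g.eval (c * M ! * y) = c * A := by linear_combination hw
  have hA : A.natAbs ≠ 1 := by
    intro h
    rcases Int.natAbs_eq_iff.mp h with h | h <;> simp [hgA, h] at hy
  refine ⟨A.natAbs.minFac, ?_, Nat.minFac_prime hA, c * M ! * y, ?_⟩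
  · by_contra! hle
    have hdvdA : (A.natAbs.minFac : ℤ) ∣ A := Int.ofNat_dvd_left.mpr A.natAbs.minFac_dvd
    have hdvdM : (A.natAbs.minFac : ℤ) ∣ M ! * y * w :=
      dvd_mul_of_dvd_left (dvd_mul_of_dvd_left (Int.natCast_dvd_natCast.mpr
        (Nat.dvd_factorial (Nat.minFac_pos _) hle)) _) _
    have h1 : (A.natAbs.minFac : ℤ) ∣ 1 := by simpa [A] using dvd_sub hdvdA hdvdM
    exact (Nat.minFac_prime hA).one_lt.ne' (Nat.dvd_one.mp (by exact_mod_cast h1))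
  · rw [hgA]
    exact dvd_mul_of_dvd_right (Int.ofNat_dvd_left.mpr A.natAbs.minFac_dvd) c

theorem Polynomial.exists_mul_add_mul_eq_C_of_isCoprime_map {R K : Type*} [CommRing R] [IsDomain R]
    [Field K] [Algebra R K] [IsFractionRing R K] {f g : R[X]} (hf : f.natDegree ≠ 0)
    (h : IsCoprime (f.map (algebraMap R K)) (g.map (algebraMap R K))) :
    ∃ r ≠ 0, ∃ a b : R[X], f * a + g * b = C r := by
  obtain ⟨a, b, -, -, e⟩ := exists_mul_add_mul_eq_C_resultant f g le_rfl le_rfl (Or.inl hf)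
  refine ⟨_, fun h0 => ?_, a, b, e⟩
  have hinj := IsFractionRing.injective R K
  have hres := resultant_map_map f g f.natDegree g.natDegree (algebraMap R K)
  rw [h0, map_zero, ← natDegree_map_eq_of_injective hinj f,
    ← natDegree_map_eq_of_injective hinj g] at hres
  exact (resultant_eq_zero_iff.mp hres).2 h

theorem Polynomial.isRoot_map_intCast_iff {f : ℤ[X]} {q : ℕ} {s : ℤ} :
    (f.map (Int.castRingHom (ZMod q))).IsRoot (s : ZMod q) ↔ (q : ℤ) ∣ f.eval s := by
  rw [IsRoot, eval_intCast_map, eq_intCast, ZMod.intCast_zmod_eq_zero_iff_dvd, Int.cast_id]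

theorem ZMod.orderOf_pos_of_ne_zero {q : ℕ} [Fact q.Prime] {x : ZMod q} (hx : x ≠ 0) :
    0 < orderOf x :=
  Nat.pos_of_dvd_of_pos (ZMod.orderOf_dvd_card_sub_one hx)
    (Nat.sub_pos_of_lt (Fact.out : q.Prime).one_lt)

theorem isRoot_pow_of_coprime_orderOf {f : ℤ[X]} {N : ℕ}
    (hN : ∀ p : ℕ, p.Prime → N ≤ p → f.eval (p : ℤ) ∣ f.eval ((p : ℤ) ^ p))
    {q : ℕ} [Fact q.Prime] {x : ZMod q} (hx : x ≠ 0)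
    (hroot : (f.map (Int.castRingHom (ZMod q))).IsRoot x) {j : ℕ} (hj : j.Coprime (orderOf x)) :
    (f.map (Int.castRingHom (ZMod q))).IsRoot (x ^ j) := by
  have hq : q.Prime := Fact.out
  have hqt : q.Coprime (orderOf x) :=
    ((Nat.coprime_self_sub_right hq.one_le).mpr (Nat.coprime_one_right q)).coprime_dvd_right
      (ZMod.orderOf_dvd_card_sub_one hx)
  have : NeZero (orderOf x) := ⟨(ZMod.orderOf_pos_of_ne_zero hx).ne'⟩
  obtain ⟨p, hpN, hp, hpx, hpj⟩ := Nat.exists_prime_gt_and_eq_mod_and_eq_mod hqt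
    (isUnit_iff_ne_zero.mpr hx) ((ZMod.isUnit_iff_coprime j _).mpr hj) N
  have hpow : x ^ p = x ^ j := by
    rw [← pow_mod_orderOf, (ZMod.natCast_eq_natCast_iff _ _ _).mp hpj, pow_mod_orderOf]
  have hfp : (q : ℤ) ∣ f.eval (p : ℤ) := isRoot_map_intCast_iff.mp (by simpa [hpx] using hroot)
  have hfpp := isRoot_map_intCast_iff.mpr (hfp.trans (hN p hp hpN.le))
  rw [← hpow, ← hpx]
  simpa using hfpp

theorem pow_factorial_eq_one_of_isRoot {f : ℤ[X]} {N : ℕ}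
    (hN : ∀ p : ℕ, p.Prime → N ≤ p → f.eval (p : ℤ) ∣ f.eval ((p : ℤ) ^ p)) (hf : f.Monic)
    {q : ℕ} [Fact q.Prime] {x : ZMod q} (hx : x ≠ 0)
    (hroot : (f.map (Int.castRingHom (ZMod q))).IsRoot x) :
    x ^ (2 * f.natDegree ^ 2)! = 1 := by
  have htot : φ (orderOf x) ≤ f.natDegree := by
    simpa [hf.natDegree_map] using totient_orderOf_le_natDegree (hf.map _).ne_zero
      fun j hj => isRoot_pow_of_coprime_orderOf hN hx hroot hj
  have hle : orderOf x ≤ 2 * f.natDegree ^ 2 :=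
    (Nat.le_two_mul_totient_sq _).trans (by gcongr)
  exact orderOf_dvd_iff_pow_eq_one.mp
    (Nat.dvd_factorial (ZMod.orderOf_pos_of_ne_zero hx) hle)

theorem dvd_X_mul_X_pow_factorial_sub_one {f : ℤ[X]} {N : ℕ}
    (hN : ∀ p : ℕ, p.Prime → N ≤ p → f.eval (p : ℤ) ∣ f.eval ((p : ℤ) ^ p)) (hf : f.Monic)
    {g : ℤ[X]} (hg : g.Monic) (hgi : Irreducible g) (hgf : g ∣ f) :
    g ∣ X * (X ^ (2 * f.natDegree ^ 2)! - 1) := by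
  set h : ℤ[X] := X * (X ^ (2 * f.natDegree ^ 2)! - 1)
  by_contra hgh
  have hg0 : g.eval 0 ≠ 0 := by
    intro h0
    have hXg : X ∣ g := X_dvd_iff.mpr (by rwa [coeff_zero_eq_eval_zero])
    rw [eq_of_monic_of_associated hg monic_X (irreducible_X.associated_of_dvd hgi hXg).symm] at hgh
    exact hgh (dvd_mul_right X _)
  have hcop : IsCoprime (g.map (algebraMap ℤ ℚ)) (h.map (algebraMap ℤ ℚ)) :=
    (hg.irreducible_iff_irreducible_map_fraction_map.mp hgi).coprime_iff_not_dvd.mpr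
      fun hdvd => hgh ((map_dvd_map _ (IsFractionRing.injective ℤ ℚ) hg).mp hdvd)
  obtain ⟨n, hn, U, V, hUV⟩ :=
    exists_mul_add_mul_eq_C_of_isCoprime_map (hg.natDegree_pos.mpr hgi.ne_one).ne' hcop
  obtain ⟨q, hq_gt, hq, s, hqs⟩ :=
    exists_prime_gt_dvd_eval (hg.natDegree_pos.mpr hgi.ne_one).ne'
      (max n.natAbs (g.eval 0).natAbs)
  have : Fact q.Prime := ⟨hq⟩
  have hgs : (g.map (Int.castRingHom (ZMod q))).IsRoot (s : ZMod q) :=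
    isRoot_map_intCast_iff.mpr hqs
  have hs : (s : ZMod q) ≠ 0 := by
    intro hs0
    have hq0 : (q : ℤ) ∣ g.eval 0 :=
      isRoot_map_intCast_iff.mp (by rwa [Int.cast_zero, ← hs0])
    exact hg0 (Int.eq_zero_of_dvd_of_natAbs_lt_natAbs hq0 (by rw [Int.natAbs_natCast]; omega))
  have hfs := hgs.dvd (Polynomial.map_dvd _ hgf)
  have hsL := pow_factorial_eq_one_of_isRoot hN hf hs hfs
  -- reducing `g * U + h * V = n` modulo `q` at the common root `s` of `g` and `h` gives `q ∣ n`
  have hqn : (q : ℤ) ∣ n := by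
    have := congrArg (fun P => (P.map (Int.castRingHom (ZMod q))).eval (s : ZMod q)) hUV
    simp only [Polynomial.map_mul, Polynomial.map_add, eval_add, eval_mul, hgs.eq_zero, h] at this
    simpa [hsL, ZMod.intCast_zmod_eq_zero_iff_dvd] using this.symm
  exact hn (Int.eq_zero_of_dvd_of_natAbs_lt_natAbs hqn (by rw [Int.natAbs_natCast]; omega))

open UniqueFactorizationMonoid in
theorem Polynomial.Monic.monic_of_mem_normalizedFactors {R : Type*} [CommRing R] [IsDomain R]
    [NormalizationMonoid R] [UniqueFactorizationMonoid R] {f g : R[X]} (hf : f.Monic)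
    (hg : g ∈ normalizedFactors f) : g.Monic := by
  obtain ⟨h, hgh⟩ := dvd_of_mem_normalizedFactors hg
  have hunit : IsUnit g.leadingCoeff :=
    IsUnit.of_mul_eq_one h.leadingCoeff (by rw [← leadingCoeff_mul, ← hgh, hf.leadingCoeff])
  rw [Monic, ← normalize_normalized_factor g hg, leadingCoeff_normalize, normalize_eq_one]
  exact hunit

def IsXPowMulCyclotomicProd (f : ℤ[X]) : Prop :=
  ∃ (e₀ m : ℕ) (d e : Fin m → ℕ), 0 < m ∧ (∀ i, 0 < d i) ∧
    f = X ^ e₀ * ∏ i, cyclotomic (d i) ℤ ^ e i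

namespace IsXPowMulCyclotomicProd

theorem one : IsXPowMulCyclotomicProd 1 :=
  ⟨0, 1, fun _ => 1, fun _ => 0, one_pos, fun _ => one_pos, by simp⟩

theorem X_mul {f : ℤ[X]} (h : IsXPowMulCyclotomicProd f) : IsXPowMulCyclotomicProd (X * f) := by
  obtain ⟨e₀, m, d, e, hm, hd, rfl⟩ := h
  exact ⟨e₀ + 1, m, d, e, hm, hd, by ring⟩

theorem cyclotomic_mul {f : ℤ[X]} (h : IsXPowMulCyclotomicProd f) {n : ℕ} (hn : 0 < n) :
    IsXPowMulCyclotomicProd (cyclotomic n ℤ * f) := by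
  obtain ⟨e₀, m, d, e, -, hd, rfl⟩ := h
  refine ⟨e₀, m + 1, Fin.cons n d, Fin.cons 1 e, m.succ_pos, Fin.cases hn hd, ?_⟩
  rw [Fin.prod_univ_succ]
  simp only [Fin.cons_zero, Fin.cons_succ, pow_one]
  ring

theorem multiset_prod {s : Multiset ℤ[X]}
    (hs : ∀ g ∈ s, g = X ∨ ∃ n, 0 < n ∧ g = cyclotomic n ℤ) :
    IsXPowMulCyclotomicProd s.prod := by
  induction s using Multiset.induction_on with
  | empty => exact one
  | cons g s ih =>
    rw [Multiset.prod_cons]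
    have ih := ih fun g' hg' => hs g' (Multiset.mem_cons_of_mem hg')
    obtain rfl | ⟨n, hn, rfl⟩ := hs g (Multiset.mem_cons_self g s)
    · exact ih.X_mul
    · exact ih.cyclotomic_mul hn

end IsXPowMulCyclotomicProd

theorem Polynomial.eq_X_or_eq_cyclotomic_of_dvd_X_mul_X_pow_sub_one {g : ℤ[X]} (hg : g.Monic)
    (hgi : Irreducible g) {L : ℕ} (hL : 0 < L) (hdvd : g ∣ X * (X ^ L - 1)) :
    g = X ∨ ∃ n, 0 < n ∧ g = cyclotomic n ℤ := by
  rw [← prod_cyclotomic_eq_X_pow_sub_one hL] at hdvd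
  rcases hgi.prime.dvd_or_dvd hdvd with hX | hcyc
  · exact .inl (eq_of_monic_of_associated hg monic_X (hgi.associated_of_dvd irreducible_X hX))
  · obtain ⟨n, hn, hgn⟩ := (Prime.dvd_finsetProd_iff hgi.prime _).mp hcyc
    have hn : 0 < n := Nat.pos_of_mem_divisors hn
    exact .inr ⟨n, hn, eq_of_monic_of_associated hg (cyclotomic.monic n ℤ)
      (hgi.associated_of_dvd (cyclotomic.irreducible hn) hgn)⟩

open UniqueFactorizationMonoid in
theorem isXPowMulCyclotomicProd_of_forall_dvd {f : ℤ[X]} (hf : f.Monic) {L : ℕ} (hL : 0 < L)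
    (h : ∀ g : ℤ[X], g.Monic → Irreducible g → g ∣ f → g ∣ X * (X ^ L - 1)) :
    IsXPowMulCyclotomicProd f := by
  have hmonic : ∀ g ∈ normalizedFactors f, g.Monic := fun g hg =>
    hf.monic_of_mem_normalizedFactors hg
  have hprod : (normalizedFactors f).prod = f := by
    refine eq_of_monic_of_associated ?_ hf (prod_normalizedFactors hf.ne_zero)
    simpa using monic_multiset_prod_of_monic _ id hmonic
  rw [← hprod]
  refine IsXPowMulCyclotomicProd.multiset_prod fun g hg => ?_
  exact eq_X_or_eq_cyclotomic_of_dvd_X_mul_X_pow_sub_one (hmonic g hg)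
    (irreducible_of_normalized_factor g hg) hL
    (h g (hmonic g hg) (irreducible_of_normalized_factor g hg) (dvd_of_mem_normalizedFactors hg))

/-- If `f ∈ ℤ[x]` is monic and there is a positive integer `N` such that
`f(p) ∣ f(p^p)` for all primes `p ≥ N`, then `f` is of the form
`x^{e₀} · Φ_{d₁}^{e₁} ⋯ Φ_{d_m}^{e_m}` for positive integers `d₁, …, d_m` and
nonnegative integers `e₀, e₁, …, e_m`. -/
theorem stmt_0 (f : Polynomial ℤ) (hf : f.Monic)
    (hdvd : ∃ N : ℕ, 0 < N ∧ ∀ p : ℕ, p.Prime → N ≤ p →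
      f.eval (p : ℤ) ∣ f.eval ((p : ℤ) ^ p)) :
    ∃ (e₀ m : ℕ) (d e : Fin m → ℕ), 0 < m ∧ (∀ i, 0 < d i) ∧
      f = X ^ e₀ * ∏ i, (cyclotomic (d i) ℤ) ^ (e i) := by
  obtain ⟨N, -, hN⟩ := hdvd
  exact isXPowMulCyclotomicProd_of_forall_dvd hf (Nat.factorial_pos _)
    fun g hg hgi hgf => dvd_X_mul_X_pow_factorial_sub_one hN hf hg hgi hgf
end

section
/- Let f ∈ ℤ[x] be a polynomial of the form f(x) = x^{e₀} · Φ_{d₁}(x)^{e₁} · Φ_{d₂}(x)^{e₂} ⋯ Φ_{d_m}(x)^{e_m}, where d₁,…,d_m are positive integers, e₀,e₁,…,e_m are nonnegative integers, and Φ_d denotes the d-th cyclotomic polynomial. Then there exists a positive integer N (for instance N = max{d₁,…,d_m} + 1) such that for every prime p ≥ N one has f(p) ∣ f(p^p). -/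
open Polynomial

/-- If `f = x^{e₀} · Φ_{d₁}^{e₁} ⋯ Φ_{d_m}^{e_m}` with `d₁, …, d_m` positive
integers and `e₀, e₁, …, e_m` nonnegative integers, then there is a positive integer `N`
(for instance `N = max{d₁,…,d_m} + 1`) such that `f(p) ∣ f(p^p)` for all primes `p ≥ N`. -/
theorem stmt_1 (m : ℕ) (hm : 0 < m) (d e : Fin m → ℕ) (e₀ : ℕ) (hd : ∀ i, 0 < d i)
    (f : Polynomial ℤ)
    (hf : f = X ^ e₀ * ∏ i, (cyclotomic (d i) ℤ) ^ (e i)) :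
    ∃ N : ℕ, 0 < N ∧ N = Finset.univ.sup d + 1 ∧
      ∀ p : ℕ, p.Prime → N ≤ p → f.eval (p : ℤ) ∣ f.eval ((p : ℤ) ^ p) := by
  refine ⟨Finset.univ.sup d + 1, Nat.succ_pos _, rfl, ?_⟩
  intro p hp hNp
  subst hf
  simp only [eval_mul, eval_pow, eval_prod, eval_X]
  apply mul_dvd_mul
  · exact pow_dvd_pow_of_dvd (dvd_pow_self _ hp.pos.ne') e₀
  · apply Finset.prod_dvd_prod_of_dvd
    intro i _
    apply pow_dvd_pow_of_dvd
    have hpd : ¬ (p ∣ d i) := by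
      intro h
      have h1 := Nat.le_of_dvd (hd i) h
      have h2 : d i ≤ Finset.univ.sup d := Finset.le_sup (Finset.mem_univ i)
      omega
    have key := cyclotomic_expand_eq_cyclotomic_mul (R := ℤ) hp hpd
    have hdvd : cyclotomic (d i) ℤ ∣ expand ℤ p (cyclotomic (d i) ℤ) :=
      ⟨cyclotomic (d i * p) ℤ, by rw [key]; ring⟩
    have := eval_dvd (x := (p : ℤ)) hdvd
    simpa [expand_eval] using this
end

section
/- Let g, h ∈ ℤ[x] be monic polynomials, with h having nonzero discriminant. Assume that there are infinitely many primes p such that the reduction of h modulo p splits completely into distinct linear factors in 𝔽_p[x], and such that for every integer k with h(k) ≡ 0 (mod p) one also has g(k) ≡ 0 (mod p). Then h divides g in ℤ[x]. -/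
open Polynomial

/-- **Lemma 3.2.** Let `g, h ∈ ℤ[x]` be monic, with `h` of nonzero discriminant
(equivalently, squarefree over `ℚ`). If for infinitely many primes `p` the reduction of `h`
modulo `p` splits completely into distinct linear factors and every integer root of `h` mod `p`
is a root of `g` mod `p`, then `h ∣ g` in `ℤ[x]`. -/
theorem stmt_4 (g h : Polynomial ℤ) (hg : g.Monic) (hh : h.Monic)
    (hdisc : Squarefree (h.map (Int.castRingHom ℚ)))
    (hinf : {p : ℕ | p.Prime ∧
        (∃ r : Fin h.natDegree → ZMod p, Function.Injective r ∧
          h.map (Int.castRingHom (ZMod p)) = ∏ i, (X - C (r i))) ∧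
        (∀ k : ℤ, (p : ℤ) ∣ h.eval k → (p : ℤ) ∣ g.eval k)}.Infinite) :
    h ∣ g := by
  rw [← Polynomial.modByMonic_eq_zero_iff_dvd hh]
  have key : ∀ p ∈ {p : ℕ | p.Prime ∧
        (∃ r : Fin h.natDegree → ZMod p, Function.Injective r ∧
          h.map (Int.castRingHom (ZMod p)) = ∏ i, (X - C (r i))) ∧
        (∀ k : ℤ, (p : ℤ) ∣ h.eval k → (p : ℤ) ∣ g.eval k)},
      ∀ n : ℕ, (p : ℤ) ∣ (g %ₘ h).coeff n := by
    rintro p ⟨hp, ⟨r, hrinj, hmap⟩, hroots⟩ n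
    haveI : Fact p.Prime := ⟨hp⟩
    set φ := Int.castRingHom (ZMod p)
    have hdvd : h.map φ ∣ g.map φ := by
      rw [hmap]
      apply Finset.prod_dvd_of_coprime
      · exact ((Polynomial.pairwise_coprime_X_sub_C hrinj).set_pairwise _)
      · intro i _
        rw [Polynomial.dvd_iff_isRoot]
        set k : ℤ := ((r i).val : ℤ)
        have hk : (k : ZMod p) = r i := by
          simp [k, ZMod.natCast_val, ZMod.cast_id]
        have hhroot : (p : ℤ) ∣ h.eval k := by
          rw [← ZMod.intCast_zmod_eq_zero_iff_dvd]
          have : ((h.eval k : ℤ) : ZMod p) = (h.map φ).eval ((k : ZMod p)) :=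
            (Polynomial.eval_intCast_map φ h k).symm
          rw [this, hmap, hk, Polynomial.eval_prod]
          exact Finset.prod_eq_zero (Finset.mem_univ i) (by simp)
        have hgroot := hroots k hhroot
        rw [← ZMod.intCast_zmod_eq_zero_iff_dvd] at hgroot
        have : ((g.eval k : ℤ) : ZMod p) = (g.map φ).eval ((k : ZMod p)) :=
          (Polynomial.eval_intCast_map φ g k).symm
        rw [this, hk] at hgroot
        exact hgroot
    have hmod : (g %ₘ h).map φ = 0 := by
      rw [Polynomial.map_modByMonic _ hh,
        Polynomial.modByMonic_eq_zero_iff_dvd (hh.map φ)]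
      exact hdvd
    have : (((g %ₘ h).coeff n : ℤ) : ZMod p) = 0 := by
      have := congrArg (fun q => q.coeff n) hmod
      simpa using this
    rwa [ZMod.intCast_zmod_eq_zero_iff_dvd] at this
  ext n
  simp only [Polynomial.coeff_zero]
  by_contra hc
  obtain ⟨p, hpS, hplt⟩ := hinf.exists_gt ((g %ₘ h).coeff n).natAbs
  have hd := key p hpS n
  have h2 : (p : ℤ) ≤ |(g %ₘ h).coeff n| :=
    Int.le_of_dvd (abs_pos.mpr hc) ((dvd_abs _ _).mpr hd)
  rw [Int.abs_eq_natAbs] at h2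
  exact absurd h2 (by exact_mod_cast Nat.not_le.mpr hplt)
end

section
/- Let g, h ∈ ℤ[x] be monic polynomials. If there exist infinitely many primes p such that the reduction of h modulo p divides the reduction of g modulo p in 𝔽_p[x], then h divides g in ℤ[x]. -/
open Polynomial

lemma int_eq_zero_of_inf_primes (n : ℤ)
    (h : {p : ℕ | p.Prime ∧ (p : ℤ) ∣ n}.Infinite) : n = 0 := by
  by_contra hn
  apply h
  apply Set.Finite.subset (Set.finite_Icc 0 n.natAbs)
  rintro p ⟨hp, hpd⟩
  have : p ∣ n.natAbs := by simpa using Int.natAbs_dvd_natAbs.mpr hpd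
  exact ⟨Nat.zero_le _, Nat.le_of_dvd (Int.natAbs_pos.mpr hn) this⟩

/-- **Remark after Lemma 3.2.** If `g, h ∈ ℤ[x]` are monic and there are
infinitely many primes `p` such that the reduction of `h` modulo `p` divides the reduction of
`g` modulo `p` in `𝔽_p[x]`, then `h ∣ g` in `ℤ[x]`. -/
theorem stmt_5 (g h : Polynomial ℤ) (hg : g.Monic) (hh : h.Monic)
    (hinf : {p : ℕ | p.Prime ∧
        h.map (Int.castRingHom (ZMod p)) ∣ g.map (Int.castRingHom (ZMod p))}.Infinite) :
    h ∣ g := by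
  rw [← Polynomial.modByMonic_eq_zero_iff_dvd hh]
  have key : ∀ p ∈ {p : ℕ | p.Prime ∧
      h.map (Int.castRingHom (ZMod p)) ∣ g.map (Int.castRingHom (ZMod p))},
      (g %ₘ h).map (Int.castRingHom (ZMod p)) = 0 := by
    rintro p ⟨hp, hdvd⟩
    rw [Polynomial.map_modByMonic _ hh]
    exact (Polynomial.modByMonic_eq_zero_iff_dvd (hh.map _)).mpr hdvd
  ext n
  simp only [Polynomial.coeff_zero]
  apply int_eq_zero_of_inf_primes
  apply hinf.mono
  rintro p ⟨hp, hdvd⟩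
  refine ⟨hp, ?_⟩
  have h0 := key p ⟨hp, hdvd⟩
  have hc := congrArg (fun q => Polynomial.coeff q n) h0
  simp only [Polynomial.coeff_map, Polynomial.coeff_zero] at hc
  haveI : Fact p.Prime := ⟨hp⟩
  exact (ZMod.intCast_zmod_eq_zero_iff_dvd _ p).mp (by simpa using hc)
end

section
/- Let p be a prime, let n and m be positive integers, and let b ≥ 2 be an integer. If p divides both Φ_n(b) and Φ_m(b), where Φ_d denotes the d-th cyclotomic polynomial, then the ratio of m and n is an integer power of p; that is, there exists an integer a (possibly negative) with m = n · p^a (equivalently, m·p^{-a} = n, so either m/n or n/m is a nonnegative power of p). -/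
open Polynomial

lemma aux_prim_root (p d : ℕ) (hp : Fact p.Prime) (hd : 0 < d) (b : ℤ)
    (hdvd : (p : ℤ) ∣ (cyclotomic d ℤ).eval b) :
    IsPrimitiveRoot (b : ZMod p) (d / p ^ d.factorization p) := by
  set k := d.factorization p
  set d' := d / p ^ k with hd'
  have hdp : ¬ p ∣ d' := Nat.not_dvd_ordCompl hp.out hd.ne'
  have hdeq : p ^ k * d' = d := Nat.ordProj_mul_ordCompl_eq_self d p
  haveI : NeZero (d' : ZMod p) := by
    refine ⟨fun h => hdp ?_⟩
    exact (ZMod.natCast_eq_zero_iff d' p).1 h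
  have hroot : (cyclotomic d (ZMod p)).IsRoot (b : ZMod p) := by
    rw [IsRoot.def, ← map_cyclotomic_int d (ZMod p), eval_map]
    show eval₂ (Int.castRingHom (ZMod p)) ((Int.castRingHom (ZMod p)) b) _ = 0
    rw [eval₂_at_apply]
    exact (ZMod.intCast_zmod_eq_zero_iff_dvd _ p).2 hdvd
  rw [← hdeq] at hroot
  exact (isRoot_cyclotomic_prime_pow_mul_iff_of_charP (p := p)).1 hroot

/-- **Lemma 3.4 (2).** If `p` is a prime, `n, m` are positive integers and
`b ≥ 2` is an integer such that `p` divides both `Φ_n(b)` and `Φ_m(b)`, then `m/n` is an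
integer power of `p`, i.e. `m = n · p^a` or `n = m · p^a` for some nonnegative integer `a`. -/
theorem stmt_7 (p n m : ℕ) (hp : p.Prime) (hn : 0 < n) (hm : 0 < m) (b : ℤ) (hb : 2 ≤ b)
    (hdvdn : (p : ℤ) ∣ (cyclotomic n ℤ).eval b)
    (hdvdm : (p : ℤ) ∣ (cyclotomic m ℤ).eval b) :
    ∃ a : ℕ, m = n * p ^ a ∨ n = m * p ^ a := by
  haveI : Fact p.Prime := ⟨hp⟩
  have h1 := aux_prim_root p n ‹_› hn b hdvdn
  have h2 := aux_prim_root p m ‹_› hm b hdvdm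
  have heq : n / p ^ n.factorization p = m / p ^ m.factorization p := by
    rw [h1.eq_orderOf, h2.eq_orderOf]
  set i := n.factorization p
  set j := m.factorization p
  have hne : p ^ i * (n / p ^ i) = n := Nat.ordProj_mul_ordCompl_eq_self n p
  have hme : p ^ j * (m / p ^ j) = m := Nat.ordProj_mul_ordCompl_eq_self m p
  rcases le_total i j with h | h
  · refine ⟨j - i, Or.inl ?_⟩
    rw [← hne, ← hme, heq]
    rw [mul_right_comm, ← pow_add, Nat.add_sub_cancel' h]
  · refine ⟨i - j, Or.inr ?_⟩
    rw [← hne, ← hme, ← heq]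
    rw [mul_right_comm, ← pow_add, Nat.add_sub_cancel' h]
end

section
/- Let b ≥ 2 and d ≥ 1 be integers such that (b,d) ≠ (2,1), (b,d) ≠ (2,6), and (b,d) ≠ (2^a − 1, 2) for every positive integer a. Then there exists a prime p with p > d and p ∣ Φ_d(b), where Φ_d denotes the d-th cyclotomic polynomial. -/
/-!
A prime `q ∣ Φ_d(b)` makes `b` a primitive root of unity of order `d / q^{v_q(d)}` modulo `q`,
so `q ∣ d` or `d ∣ q - 1`. If no prime divisor exceeds `d`, all of them divide `d`; the relation
`d / q^{v_q(d)} ∣ q - 1` forces them to coincide, and for `d ≠ 2` a lifting-the-exponent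
argument shows that this prime `p` divides `Φ_d(b)` only once, so `Φ_d(b) = p`. Writing
`d = p^k m` with `p ∤ m` and `c = b^{p^{k-1}}`, we get `Φ_d(b) = Φ_{mp}(c)`. For `m = 1` this is
`1 + c + ⋯ + c^{p-1} > p`; for `m ≥ 2`, `Φ_m(c^p) = Φ_{mp}(c) Φ_m(c)` together with
`(x - 1)^{φ(m)} < Φ_m(x) ≤ (x + 1)^{φ(m)}` gives `c^p - 1 < p (c + 1)`, which only `c = 2, p = 3`
survives. The cases `d = 1, 2` are `Φ_1(b) = b - 1` and `Φ_2(b) = b + 1`.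
-/

open Polynomial Finset

theorem Nat.eq_prime_of_unique_prime_dvd {n p : ℕ} (hpn : p ∣ n) (hsq : ¬p ^ 2 ∣ n)
    (h : ∀ {q : ℕ}, q.Prime → q ∣ n → q = p) : n = p := by
  obtain ⟨r, rfl⟩ := hpn
  suffices r = 1 by rw [this, mul_one]
  by_contra hr
  have hq := h (Nat.minFac_prime hr) ((Nat.minFac_dvd r).mul_left p)
  exact hsq (sq p ▸ mul_dvd_mul_left p (hq ▸ Nat.minFac_dvd r))

theorem not_sq_dvd_geom_sum_of_dvd_sub_one {p : ℕ} (hp : p.Prime) {u : ℤ}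
    (hu : (p : ℤ) ∣ u - 1) (h2 : p = 2 → 4 ∣ u - 1) : ¬(p : ℤ) ^ 2 ∣ ∑ i ∈ range p, u ^ i := by
  rcases hp.eq_two_or_odd' with rfl | hodd
  · have h4 := h2 rfl
    simp only [sum_range_succ, sum_range_zero, pow_zero, pow_one]
    omega
  · have hpZ : Prime (p : ℤ) := Nat.prime_iff_prime_int.mp hp
    have hpu : ¬(p : ℤ) ∣ u := fun hpu ↦ hpZ.not_dvd_one (by simpa using dvd_sub hpu hu)
    have hmult := emultiplicity_geom_sum₂_eq_one hpZ hodd (y := 1) hu hpu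
    simp only [one_pow, mul_one] at hmult
    rw [← emultiplicity_lt_iff_not_dvd, hmult]
    norm_num

theorem eq_two_and_eq_three_of_pow_sub_one_lt {c : ℤ} {p : ℕ} (hc : 2 ≤ c) (hp : 3 ≤ p)
    (h : c ^ p - 1 < p * (c + 1)) : c = 2 ∧ p = 3 := by
  obtain ⟨q, rfl⟩ := Nat.exists_eq_add_of_le' hp
  have hbern : 1 + q * (c - 1) ≤ c ^ q := by
    simpa using one_add_mul_le_pow (a := c - 1) (by linarith) q
  have hq : (0 : ℤ) ≤ q := by positivity
  have hbern3 := mul_le_mul_of_nonneg_right hbern (by positivity : (0 : ℤ) ≤ c ^ 3)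
  rw [pow_add] at h
  push_cast at h
  by_contra hne
  rcases eq_or_lt_of_le hc with rfl | hc3
  · have : (1 : ℤ) ≤ q := by exact_mod_cast (by omega : 1 ≤ q)
    nlinarith
  · have hcube : 9 * c ≤ c ^ 3 := by nlinarith [pow_succ c 2]
    nlinarith [mul_le_mul_of_nonneg_left hcube (by nlinarith : (0 : ℤ) ≤ 1 + q * (c - 1)),
      mul_nonneg hq (by nlinarith : (0 : ℤ) ≤ 9 * c * (c - 1) - c - 1)]

namespace Polynomial

theorem cyclotomic_prime_pow_mul_eval {R : Type*} [CommRing R] {p n : ℕ} (hp : p.Prime)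
    (hn : p ∣ n) (j : ℕ) (x : R) :
    (cyclotomic (p ^ j * n) R).eval x = (cyclotomic n R).eval (x ^ p ^ j) := by
  induction j generalizing x with
  | zero => simp
  | succ j ih =>
    rw [pow_succ, mul_right_comm, ← cyclotomic_expand_eq_cyclotomic hp (hn.mul_left _),
      expand_eval, ih, ← pow_mul, mul_comm p]

theorem cyclotomic_mul_eval_dvd_geom_sum {R : Type*} [CommRing R] [IsDomain R] {x : R}
    {n t : ℕ} (hn : 1 < n) (hx : x ^ t ≠ 1) :
    (cyclotomic (n * t) R).eval x ∣ ∑ i ∈ range n, (x ^ t) ^ i := by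
  have ht : t ≠ 0 := by rintro rfl; exact hx (pow_zero x)
  have htd : t ∈ (n * t).properDivisors :=
    Nat.mem_properDivisors.mpr ⟨dvd_mul_left t n, lt_mul_left (Nat.pos_of_ne_zero ht) hn⟩
  have hdvd := eval_dvd (x := x) (X_pow_sub_one_mul_cyclotomic_dvd_X_pow_sub_one_of_dvd R htd)
  have hgeom : x ^ (n * t) - 1 = (x ^ t - 1) * ∑ i ∈ range n, (x ^ t) ^ i := by
    rw [mul_comm (x ^ t - 1), geom_sum_mul, ← pow_mul, mul_comm t]
  simp only [eval_mul, eval_sub, eval_pow, eval_X, eval_one] at hdvd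
  rw [hgeom] at hdvd
  exact (mul_dvd_mul_iff_left (sub_ne_zero.mpr hx)).mp hdvd

theorem intCast_cyclotomic_eval {R : Type*} [Ring R] (n : ℕ) (c : ℤ) :
    (((cyclotomic n ℤ).eval c : ℤ) : R) = (cyclotomic n R).eval (c : R) := by
  rw [← map_cyclotomic_int n R, eval_intCast_map, eq_intCast, Int.cast_id]

theorem natCast_lt_cyclotomic_prime_eval {p : ℕ} (hp : p.Prime) {c : ℤ} (hc : 1 < c) :
    (p : ℤ) < (cyclotomic p ℤ).eval c := by
  have := Fact.mk hp
  rw [cyclotomic_prime, eval_geom_sum]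
  calc (p : ℤ) = ∑ _i ∈ range p, 1 := by simp
    _ < ∑ i ∈ range p, c ^ i :=
      sum_lt_sum (fun i _ ↦ one_le_pow₀ hc.le) ⟨1, mem_range.mpr hp.one_lt, by simpa⟩

/-- From `Φ_m(c^p) = Φ_{mp}(c) Φ_m(c)` and `(x - 1)^{φ(m)} < Φ_m(x) ≤ (x + 1)^{φ(m)}`. -/
theorem pow_sub_one_lt_cyclotomic_mul_prime_eval_mul {m p : ℕ} (hp : p.Prime) (hm : 2 ≤ m)
    (hpm : ¬p ∣ m) {c : ℤ} (hc : 1 < c) :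
    c ^ p - 1 < (cyclotomic (m * p) ℤ).eval c * (c + 1) := by
  set x := (cyclotomic (m * p) ℤ).eval c
  have hx : (1 : ℝ) ≤ x := by exact_mod_cast cyclotomic_pos' (m * p) hc
  have hsplit : (cyclotomic m ℝ).eval ((c : ℝ) ^ p) = x * (cyclotomic m ℝ).eval (c : ℝ) := by
    rw [← expand_eval, cyclotomic_expand_eq_cyclotomic_mul hp hpm, eval_mul,
      ← intCast_cyclotomic_eval]
  have hcR : (1 : ℝ) < c := by exact_mod_cast hc
  have hφ : m.totient ≠ 0 := (Nat.totient_pos.mpr (by omega)).ne'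
  have key : ((c : ℝ) ^ p - 1) ^ m.totient < (x * (c + 1)) ^ m.totient :=
    calc ((c : ℝ) ^ p - 1) ^ m.totient < (cyclotomic m ℝ).eval ((c : ℝ) ^ p) :=
          sub_one_pow_totient_lt_cyclotomic_eval hm (one_lt_pow₀ hcR hp.ne_zero)
      _ ≤ x * (c + 1) ^ m.totient := by
          rw [hsplit]
          exact mul_le_mul_of_nonneg_left (cyclotomic_eval_le_add_one_pow_totient hcR m)
            (by linarith)
      _ ≤ x ^ m.totient * (c + 1) ^ m.totient := by
          gcongr
          exact le_self_pow₀ hx hφ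
      _ = (x * (c + 1)) ^ m.totient := (mul_pow _ _ _).symm
  exact_mod_cast lt_of_pow_lt_pow_left₀ _ (by positivity) key

variable {b : ℤ} {d p q : ℕ}

theorem isPrimitiveRoot_ordCompl_of_dvd_cyclotomic_eval [Fact p.Prime] (hd : d ≠ 0)
    (h : (p : ℤ) ∣ (cyclotomic d ℤ).eval b) : IsPrimitiveRoot (b : ZMod p) (ordCompl[p] d) := by
  have := NeZero.of_not_dvd (ZMod p) (Nat.not_dvd_ordCompl Fact.out hd)
  rw [← isRoot_cyclotomic_prime_pow_mul_iff_of_charP (k := d.factorization p),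
    Nat.ordProj_mul_ordCompl_eq_self, IsRoot.def, ← intCast_cyclotomic_eval,
    ZMod.intCast_zmod_eq_zero_iff_dvd]
  exact h

theorem ordCompl_dvd_sub_one_of_dvd_cyclotomic_eval (hp : p.Prime) (hd : d ≠ 0)
    (h : (p : ℤ) ∣ (cyclotomic d ℤ).eval b) : ordCompl[p] d ∣ p - 1 := by
  have := Fact.mk hp
  have hprim := isPrimitiveRoot_ordCompl_of_dvd_cyclotomic_eval hd h
  rw [hprim.eq_orderOf]
  exact ZMod.orderOf_dvd_card_sub_one (hprim.ne_zero (Nat.ordCompl_pos p hd).ne')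

theorem dvd_of_dvd_cyclotomic_eval_of_le (hp : p.Prime) (hd : d ≠ 0)
    (h : (p : ℤ) ∣ (cyclotomic d ℤ).eval b) (hpd : p ≤ d) : p ∣ d := by
  by_contra hndvd
  have hdvd := ordCompl_dvd_sub_one_of_dvd_cyclotomic_eval hp hd h
  rw [Nat.factorization_eq_zero_of_not_dvd hndvd, pow_zero, Nat.div_one] at hdvd
  have := Nat.le_of_dvd (Nat.sub_pos_of_lt hp.one_lt) hdvd
  omega

/-- Two such primes would satisfy `q ∣ p - 1` and `p ∣ q - 1`. -/
theorem eq_of_dvd_cyclotomic_eval (hp : p.Prime) (hq : q.Prime) (hd : d ≠ 0)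
    (hpN : (p : ℤ) ∣ (cyclotomic d ℤ).eval b) (hqN : (q : ℤ) ∣ (cyclotomic d ℤ).eval b)
    (hpd : p ∣ d) (hqd : q ∣ d) : p = q := by
  by_contra hpq
  have hqp : q ∣ p - 1 := (Nat.dvd_ordCompl_of_dvd_not_dvd hqd
    ((Nat.prime_dvd_prime_iff_eq hp hq).not.mpr hpq)).trans
    (ordCompl_dvd_sub_one_of_dvd_cyclotomic_eval hp hd hpN)
  have hpq' : p ∣ q - 1 := (Nat.dvd_ordCompl_of_dvd_not_dvd hpd
    ((Nat.prime_dvd_prime_iff_eq hq hp).not.mpr (Ne.symm hpq))).trans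
    (ordCompl_dvd_sub_one_of_dvd_cyclotomic_eval hq hd hqN)
  have := Nat.le_of_dvd (Nat.sub_pos_of_lt hp.one_lt) hqp
  have := Nat.le_of_dvd (Nat.sub_pos_of_lt hq.one_lt) hpq'
  omega

theorem not_sq_dvd_cyclotomic_eval (hb : 1 < b) (hp : p.Prime) (hpd : p ∣ d) (hd2 : d ≠ 2)
    (h : (p : ℤ) ∣ (cyclotomic d ℤ).eval b) : ¬(p : ℤ) ^ 2 ∣ (cyclotomic d ℤ).eval b := by
  have := Fact.mk hp
  have hd : d ≠ 0 := by
    rintro rfl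
    simp only [cyclotomic_zero, eval_one] at h
    exact hp.ne_one (by exact_mod_cast Int.eq_one_of_dvd_one (by positivity) h)
  obtain ⟨t, rfl⟩ := hpd
  have ht : t ≠ 0 := right_ne_zero_of_mul hd
  have hcompl : ordCompl[p] (p * t) = ordCompl[p] t := by
    rw [← Nat.ordCompl_div_of_dvd hp (dvd_mul_right p t), Nat.mul_div_cancel_left t hp.pos]
  have hu : (p : ℤ) ∣ b ^ t - 1 := by
    rw [← ZMod.intCast_zmod_eq_zero_iff_dvd, Int.cast_sub, Int.cast_pow, Int.cast_one,
      sub_eq_zero, (isPrimitiveRoot_ordCompl_of_dvd_cyclotomic_eval hd h).pow_eq_one_iff_dvd,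
      hcompl]
    exact Nat.ordCompl_dvd t p
  have h4 : p = 2 → 4 ∣ b ^ t - 1 := by
    rintro rfl
    obtain ⟨s, rfl⟩ : Even t := by
      by_contra hodd
      have hself : ordCompl[2] t = t := (Nat.ordCompl_eq_self_iff_zero_or_not_dvd t hp).mpr
        (Or.inr (by rwa [← even_iff_two_dvd]))
      have := ordCompl_dvd_sub_one_of_dvd_cyclotomic_eval hp hd h
      rw [hcompl, hself, Nat.dvd_one] at this
      exact hd2 (by rw [this])
    have hbodd : Odd (b ^ s) := by
      push_cast at hu
      have : Odd (b ^ (s + s)) := Int.odd_iff.mpr (by omega)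
      exact ((Int.odd_pow.mp this).resolve_right ht).pow
    rw [← two_mul, pow_mul']
    exact (by norm_num : (4 : ℤ) ∣ 8).trans (Int.eight_dvd_sq_sub_one_of_odd hbodd)
  exact fun hsq ↦ not_sq_dvd_geom_sum_of_dvd_sub_one hp hu h4
    (hsq.trans (cyclotomic_mul_eval_dvd_geom_sum hp.one_lt (one_lt_pow₀ hb ht).ne'))

theorem exists_prime_eq_cyclotomic_eval (hb : 1 < b) (hd : 2 < d)
    (h : ∀ {q : ℕ}, q.Prime → (q : ℤ) ∣ (cyclotomic d ℤ).eval b → q ∣ d) :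
    ∃ p : ℕ, p.Prime ∧ p ∣ d ∧ (cyclotomic d ℤ).eval b = p := by
  lift b to ℕ using (by omega)
  set N := (cyclotomic d ℤ).eval (b : ℤ)
  have hN : 0 < N := cyclotomic_pos' d hb
  have hN1 : N.natAbs ≠ 1 := by
    have := sub_one_lt_natAbs_cyclotomic_eval (by omega : 1 < d) (by omega : b ≠ 1)
    omega
  obtain ⟨p, hp, hpN⟩ := Nat.exists_prime_and_dvd hN1
  have hpd : p ∣ d := h hp (Int.natCast_dvd.mpr hpN)
  have hNp : N.natAbs = p := Nat.eq_prime_of_unique_prime_dvd hpN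
    (fun hsq ↦ not_sq_dvd_cyclotomic_eval hb hp hpd (by omega) (Int.natCast_dvd.mpr hpN)
      (by exact_mod_cast Int.natCast_dvd.mpr hsq))
    (fun hq hqN ↦ eq_of_dvd_cyclotomic_eval hq hp (by omega) (Int.natCast_dvd.mpr hqN)
      (Int.natCast_dvd.mpr hpN) (h hq (Int.natCast_dvd.mpr hqN)) hpd)
  exact ⟨p, hp, hpd, by omega⟩

theorem eq_two_and_eq_six_of_cyclotomic_eval_eq (hb : 1 < b) (hp : p.Prime) (hpd : p ∣ d)
    (hd : d ≠ 0) (hN : (cyclotomic d ℤ).eval b = p) : b = 2 ∧ d = 6 := by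
  set k := d.factorization p
  set m := ordCompl[p] d
  have hk : k ≠ 0 := (hp.factorization_pos_of_dvd hd hpd).ne'
  have hmp : m ∣ p - 1 := ordCompl_dvd_sub_one_of_dvd_cyclotomic_eval hp hd (dvd_of_eq hN.symm)
  have hd' : p ^ (k - 1) * (m * p) = d := by
    rw [mul_comm m p, ← mul_assoc, ← pow_succ, Nat.sub_add_cancel (Nat.one_le_iff_ne_zero.mpr hk)]
    exact Nat.ordProj_mul_ordCompl_eq_self d p
  set c := b ^ p ^ (k - 1)
  have hbc : b ≤ c := le_self_pow₀ hb.le (pow_ne_zero _ hp.ne_zero)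
  have hcN : (cyclotomic (m * p) ℤ).eval c = p := by
    rw [← cyclotomic_prime_pow_mul_eval hp (dvd_mul_left p m), hd', hN]
  rcases (show m = 1 ∨ 2 ≤ m by have := Nat.ordCompl_pos p hd; omega) with hm1 | hm2
  · rw [hm1, one_mul] at hcN
    exact absurd hcN (natCast_lt_cyclotomic_prime_eval hp (hb.trans_le hbc)).ne'
  have hp3 : 3 ≤ p := by
    have := Nat.le_of_dvd (Nat.sub_pos_of_lt hp.one_lt) hmp
    omega
  obtain ⟨hc2, rfl⟩ := eq_two_and_eq_three_of_pow_sub_one_lt (by omega) hp3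
    (hcN ▸ pow_sub_one_lt_cyclotomic_mul_prime_eval_mul hp hm2 (Nat.not_dvd_ordCompl hp hd)
      (hb.trans_le hbc))
  have hb2 : b = 2 := by omega
  have hk1 : k = 1 := by
    have h2 : (2 : ℤ) ^ 3 ^ (k - 1) = 2 ^ 1 := by
      rw [pow_one]
      nth_rw 1 [← hb2]
      exact hc2
    have : 3 ^ (k - 1) = 1 := Int.pow_right_injective (by norm_num) h2
    rw [Nat.pow_eq_one] at this
    omega
  have hm : m = 2 := by
    have := Nat.le_of_dvd (by norm_num) hmp
    omega
  refine ⟨hb2, ?_⟩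
  rw [← hd', hk1, hm]
  norm_num

end Polynomial

/-- **Lemma 3.7.** Let `b ≥ 2` and `d ≥ 1` be integers with `(b,d) ≠ (2,1)`,
`(b,d) ≠ (2,6)` and `(b,d) ≠ (2^a - 1, 2)` for every positive integer `a`. Then `Φ_d(b)` has
a prime divisor `p > d`. -/
theorem stmt_8 (b : ℤ) (d : ℕ) (hb : 2 ≤ b) (hd : 1 ≤ d)
    (h1 : ¬(b = 2 ∧ d = 1)) (h2 : ¬(b = 2 ∧ d = 6))
    (h3 : ¬(d = 2 ∧ ∃ a : ℕ, 0 < a ∧ b = 2 ^ a - 1)) :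
    ∃ p : ℕ, p.Prime ∧ d < p ∧ (p : ℤ) ∣ (cyclotomic d ℤ).eval b := by
  by_contra! hsmall
  have hfac : ∀ {q : ℕ}, q.Prime → (q : ℤ) ∣ (cyclotomic d ℤ).eval b → q ∣ d := fun hq hqN ↦
    dvd_of_dvd_cyclotomic_eval_of_le hq (by omega) hqN (not_lt.mp (hsmall _ hq · hqN))
  obtain rfl | rfl | hd3 : d = 1 ∨ d = 2 ∨ 2 < d := by omega
  · have hN1 : ((cyclotomic 1 ℤ).eval b).natAbs ≠ 1 := by
      simp only [cyclotomic_one, eval_sub, eval_X, eval_one]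
      omega
    obtain ⟨q, hq, hqN⟩ := Nat.exists_prime_and_dvd hN1
    exact hq.one_lt.ne' (Nat.dvd_one.mp (hfac hq (Int.natCast_dvd.mpr hqN)))
  · simp only [cyclotomic_two, eval_add, eval_X, eval_one] at hfac
    obtain ⟨L, hL⟩ : ∃ L, (b + 1).natAbs = 2 ^ L :=
      ⟨_, Nat.eq_prime_pow_of_unique_prime_dvd (by omega) fun hq hqN ↦
        (Nat.prime_dvd_prime_iff_eq hq Nat.prime_two).mp (hfac hq (Int.natCast_dvd.mpr hqN))⟩
    have hL' : b + 1 = 2 ^ L := by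
      rw [← Int.natAbs_of_nonneg (by omega : 0 ≤ b + 1), hL]
      norm_cast
    refine h3 ⟨rfl, L, Nat.pos_of_ne_zero ?_, by omega⟩
    rintro rfl
    omega
  · obtain ⟨p, hp, hpd, hN⟩ := exists_prime_eq_cyclotomic_eval (by omega) hd3 hfac
    exact h2 (eq_two_and_eq_six_of_cyclotomic_eval_eq (by omega) hp hpd (by omega) hN)
end

section
/- Let g ∈ ℤ[x] be a monic polynomial with g(0) ≠ 0 and deg(g) ≥ 1, and suppose there is a positive integer N₀ such that for every prime p ≥ N₀ and every prime q, q ∣ g(p) implies q ∣ g(p^p). Let q be a prime with q > N₀ and q > |g(0)|, and let r be an integer with q ∣ g(r). Then for every positive integer l coprime to q − 1, one has q ∣ g(r^l). -/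
open Polynomial

/-- Let `g ∈ ℤ[x]` be monic with `g(0) ≠ 0` and `deg g ≥ 1`, and suppose
there is a positive integer `N₀` such that for every prime `p ≥ N₀` and every prime `q`,
`q ∣ g(p)` implies `q ∣ g(p^p)`. If `q` is a prime with `q > N₀` and `q > |g(0)|`, and `r` is
an integer with `q ∣ g(r)`, then `q ∣ g(r^l)` for every positive integer `l` coprime to
`q - 1`. -/
theorem stmt_10 (g : Polynomial ℤ) (hg : g.Monic) (hg0 : g.eval 0 ≠ 0)
    (hdeg : 1 ≤ g.natDegree) (N₀ : ℕ) (hN₀ : 0 < N₀)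
    (hdvd : ∀ p : ℕ, p.Prime → N₀ ≤ p → ∀ q : ℕ, q.Prime →
      (q : ℤ) ∣ g.eval (p : ℤ) → (q : ℤ) ∣ g.eval ((p : ℤ) ^ p))
    (q : ℕ) (hq : q.Prime) (hqN : N₀ < q) (hqabs : (g.eval 0).natAbs < q)
    (r : ℤ) (hr : (q : ℤ) ∣ g.eval r) :
    ∀ l : ℕ, 0 < l → Nat.Coprime l (q - 1) → (q : ℤ) ∣ g.eval (r ^ l) := by
  intro l hl hlcop
  haveI : Fact q.Prime := ⟨hq⟩
  have hq2 : 2 ≤ q := hq.two_le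
  -- evaluation respects congruences
  have hev : ∀ a b : ℤ, (q : ℤ) ∣ b - a → (q : ℤ) ∣ g.eval b - g.eval a := by
    intro a b hab
    exact hab.trans (sub_dvd_eval_sub b a g)
  -- q does not divide r
  have hqr : ¬ (q : ℤ) ∣ r := by
    intro hqr'
    have h1 : (q : ℤ) ∣ g.eval 0 - g.eval r := hev r 0 (by simpa using hqr'.neg_right)
    have h2 : (q : ℤ) ∣ g.eval 0 := by
      have := h1.add hr
      simpa using this
    have h3 : q ∣ (g.eval 0).natAbs := Int.natCast_dvd_natCast.mp (by
      simpa [Int.dvd_natAbs] using h2)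
    have := Nat.le_of_dvd (Int.natAbs_pos.mpr hg0) h3
    omega
  -- coprimality of q and q-1
  have hcop : Nat.Coprime q (q - 1) := by
    have h := Nat.dvd_sub (Nat.gcd_dvd_left q (q - 1)) (Nat.gcd_dvd_right q (q - 1))
    rw [show q - (q - 1) = 1 by omega] at h
    exact Nat.eq_one_of_dvd_one h
  haveI : NeZero (q * (q - 1)) := ⟨by
    have : 0 < q * (q - 1) := Nat.mul_pos (by omega) (by omega)
    omega⟩
  let e := ZMod.chineseRemainder hcop
  let a : ZMod (q * (q - 1)) := e.symm ((r : ZMod q), (l : ZMod (q - 1)))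
  have ha : IsUnit a := by
    have h1 : IsUnit ((r : ZMod q), (l : ZMod (q - 1))) := by
      obtain ⟨u, hu⟩ : IsUnit ((r : ℤ) : ZMod q) := by
        apply Ne.isUnit
        simpa [ZMod.intCast_zmod_eq_zero_iff_dvd] using hqr
      obtain ⟨v, hv⟩ : IsUnit ((l : ℕ) : ZMod (q - 1)) :=
        (ZMod.isUnit_iff_coprime l (q - 1)).mpr hlcop
      exact ⟨MulEquiv.prodUnits.symm (u, v), by rw [← hu, ← hv]; rfl⟩
    exact h1.map e.symm.toRingHom.toMonoidHom
  obtain ⟨p, hpgt, hpp, hpa⟩ := Nat.forall_exists_prime_gt_and_eq_mod ha (max N₀ l)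
  have hpN : N₀ ≤ p := le_trans (le_max_left _ _) hpgt.le
  have hpl : l ≤ p := le_trans (le_max_right _ _) hpgt.le
  -- extract the two congruences
  have hpair : e (p : ZMod (q * (q - 1))) = ((r : ZMod q), (l : ZMod (q - 1))) := by
    rw [hpa]
    exact e.apply_symm_apply _
  rw [map_natCast] at hpair
  have hfst : ((p : ℕ) : ZMod q) = ((r : ℤ) : ZMod q) := by
    have := congrArg Prod.fst hpair
    simpa using this
  have hsnd : ((p : ℕ) : ZMod (q - 1)) = ((l : ℕ) : ZMod (q - 1)) := by
    have := congrArg Prod.snd hpair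
    simpa using this
  have hpq' : (q : ℤ) ∣ (p : ℤ) - r := by
    have : (((p : ℤ) - r : ℤ) : ZMod q) = 0 := by push_cast [hfst]; ring
    exact (ZMod.intCast_zmod_eq_zero_iff_dvd _ _).mp this
  have hpl' : (q - 1) ∣ p - l := by
    have : p ≡ l [MOD q - 1] := (ZMod.natCast_eq_natCast_iff _ _ _).mp hsnd
    exact (Nat.modEq_iff_dvd' hpl).mp this.symm
  -- q ∣ g(p)
  have hgp : (q : ℤ) ∣ g.eval (p : ℤ) := by
    have h1 := hev r (p : ℤ) hpq'
    have := h1.add hr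
    simpa using this
  -- q ∣ g(p^p)
  have hgpp : (q : ℤ) ∣ g.eval ((p : ℤ) ^ p) := hdvd p hpp hpN q hq hgp
  -- p^p ≡ r^l mod q
  obtain ⟨k, hk⟩ := hpl'
  have hpeq : p = l + (q - 1) * k := by omega
  have hfer : (q : ℤ) ∣ r ^ (q - 1) - 1 := by
    have h := Int.ModEq.pow_card_sub_one_eq_one hq
      (((Nat.prime_iff_prime_int.mp hq).coprime_iff_not_dvd.mpr hqr).symm)
    exact Int.ModEq.dvd h.symm
  have hppow : (q : ℤ) ∣ (p : ℤ) ^ p - r ^ p :=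
    hpq'.trans (sub_dvd_pow_sub_pow (p : ℤ) r p)
  have hrp : (q : ℤ) ∣ r ^ p - r ^ l := by
    have h1 : r ^ p - r ^ l = r ^ l * ((r ^ (q - 1)) ^ k - 1) := by
      rw [hpeq, pow_add, pow_mul]; ring
    have h2 : r ^ (q - 1) - 1 ∣ (r ^ (q - 1)) ^ k - 1 := by
      simpa using sub_dvd_pow_sub_pow (r ^ (q - 1)) 1 k
    rw [h1]
    exact Dvd.dvd.mul_left (hfer.trans h2) _
  have hfinal : (q : ℤ) ∣ (p : ℤ) ^ p - r ^ l := by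
    have := hppow.add hrp
    simpa using this
  have := hgpp.sub (hev (r ^ l) ((p : ℤ) ^ p) hfinal)
  simpa using this
end

section
/- Let g ∈ ℤ[x] be a monic squarefree polynomial with g(0) ≠ 0 and deg(g) ≥ 1, and suppose there is a positive integer N₀ such that for every prime p ≥ N₀ and every prime q, q ∣ g(p) implies q ∣ g(p^p). Then there exists a positive integer M such that g(x) divides x^M − 1 in ℤ[x]. -/
/-!
Let `q` be a prime not dividing `g(0)` and `r` a root of `g` mod `q`, of multiplicative
order `d`. For `j` prime to `d`, Dirichlet's theorem gives a prime `p ≥ N₀` with `p ≡ r (mod q)`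
and `p ≡ j (mod d)`; then `q ∣ g(p)`, hence `q ∣ g(p^p)`, and `p^p ≡ r^j (mod q)`. So all `φ(d)`
primitive `d`-th roots of unity are roots of `g` mod `q`, whence `φ(d) ≤ deg g`,
`d ≤ 2 (deg g)^2` and `r^M = 1` for `M = (2 (deg g)^2)!`.

Thus for an irreducible factor `f` of `g`, every large prime dividing a value `f(m)` divides
`m^M - 1`. If `f ∤ X^M - 1`, there is a Bézout identity `A f + B (X^M - 1) = c` in `ℤ[X]` with
`c ≠ 0`, and Schur's theorem (the values of a nonconstant integer polynomial have arbitrarily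
large prime divisors) gives a contradiction. As `g` is squarefree, `g ∣ X^M - 1`.
-/

open Polynomial
open scoped Nat

-- The factor `gcd 2 n` makes the bound multiplicative: of two coprime numbers at most one is even.
theorem Nat.le_gcd_two_mul_totient_sq (n : ℕ) : n ≤ Nat.gcd 2 n * φ n ^ 2 := by
  induction n using Nat.recOnPosPrimePosCoprime with
  | zero => simp
  | one => simp
  | prime_pow p k hp hk =>
    rw [Nat.totient_prime_pow hp hk]
    have hw : p ≤ Nat.gcd 2 (p ^ k) * (p - 1) ^ 2 := by
      rcases hp.eq_two_or_odd' with rfl | hodd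
      · simp [Nat.gcd_eq_left (dvd_pow_self 2 hk.ne')]
      · obtain ⟨c, rfl⟩ : ∃ c, p = c + 1 := ⟨p - 1, by have := hp.two_le; omega⟩
        have hc : 2 ≤ c := by
          rcases hodd with ⟨m, hm⟩; have := hp.two_le; omega
        have hgcd := Nat.gcd_pos_of_pos_left ((c + 1) ^ k) two_pos
        rw [Nat.add_sub_cancel]
        nlinarith
    calc p ^ k = p ^ (k - 1) * p := by rw [← pow_succ, Nat.sub_add_cancel hk]
      _ ≤ (p ^ (k - 1)) ^ 2 * (Nat.gcd 2 (p ^ k) * (p - 1) ^ 2) :=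
        Nat.mul_le_mul (Nat.le_self_pow two_ne_zero _) hw
      _ = Nat.gcd 2 (p ^ k) * (p ^ (k - 1) * (p - 1)) ^ 2 := by ring
  | coprime a b _ _ hab iha ihb =>
    rw [Nat.Coprime.gcd_mul 2 hab, Nat.totient_mul hab]
    calc a * b ≤ (Nat.gcd 2 a * φ a ^ 2) * (Nat.gcd 2 b * φ b ^ 2) := Nat.mul_le_mul iha ihb
      _ = Nat.gcd 2 a * Nat.gcd 2 b * (φ a * φ b) ^ 2 := by ring

theorem Nat.le_two_mul_totient_sq_s12 (n : ℕ) : n ≤ 2 * φ n ^ 2 :=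
  (n.le_gcd_two_mul_totient_sq).trans
    (Nat.mul_le_mul_right _ (Nat.le_of_dvd two_pos (Nat.gcd_dvd_left 2 n)))

theorem Polynomial.exists_lt_abs_eval_mul {f : ℤ[X]} (hf : 0 < f.degree) {a : ℤ} (ha : a ≠ 0)
    (B : ℤ) : ∃ t : ℕ, B < |f.eval (a * t)| := by
  have hmap : 0 < (f.map (Int.castRingHom ℝ)).degree := by
    rwa [degree_map_eq_of_injective (RingHom.injective_int _)]
  have hz : Filter.Tendsto (fun t : ℕ => |(a : ℝ) * t|) Filter.atTop Filter.atTop := by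
    simp_rw [abs_mul, Nat.abs_cast]
    exact (tendsto_natCast_atTop_atTop).const_mul_atTop (by positivity)
  obtain ⟨t, ht⟩ := ((tendsto_abv_atTop (abs : ℝ → ℝ) _ hmap
    (z := fun t : ℕ => (a : ℝ) * t) hz).eventually_gt_atTop (B : ℝ)).exists
  refine ⟨t, ?_⟩
  have := eval_intCast_map (Int.castRingHom ℝ) f (a * t)
  rw [eq_intCast, Int.cast_mul, Int.cast_natCast] at this
  rw [this] at ht
  exact_mod_cast ht

theorem Polynomial.exists_prime_gt_dvd_eval_s12 {f : ℤ[X]} (hf : 0 < f.degree) (K : ℕ) :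
    ∃ q : ℕ, q.Prime ∧ K < q ∧ ∃ m : ℤ, (q : ℤ) ∣ f.eval m := by
  by_cases h0 : f.eval 0 = 0
  · obtain ⟨q, hKq, hq⟩ := Nat.exists_infinite_primes (K + 1)
    refine ⟨q, hq, hKq, q, ?_⟩
    simpa [h0] using sub_dvd_eval_sub (q : ℤ) 0 f
  set c := f.eval 0
  have hm : (c * K ! : ℤ) ≠ 0 := mul_ne_zero h0 (by positivity)
  obtain ⟨t, ht⟩ := exists_lt_abs_eval_mul hf hm |c|
  obtain ⟨u, hu⟩ := sub_dvd_eval_sub (c * K ! * t) 0 f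
  -- A prime factor of `1 + K! t u` cannot divide `K!`.
  have hval : f.eval (c * K ! * t) = c * (1 + K ! * (t * u)) := by
    rw [sub_zero] at hu; linear_combination hu
  have hw : (1 + K ! * (t * u)).natAbs ≠ 1 := by
    intro h1
    rw [hval, abs_mul, Int.abs_eq_natAbs (1 + _), h1] at ht
    simp at ht
  obtain ⟨q, hq, hqw⟩ := Nat.exists_prime_and_dvd hw
  have hqw' : (q : ℤ) ∣ 1 + K ! * (t * u) := Int.natCast_dvd.mpr hqw
  refine ⟨q, hq, ?_, c * K ! * t, hval ▸ hqw'.mul_left c⟩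
  by_contra! hqK
  have hq1 : (q : ℤ) ∣ 1 := by
    have hqK' : (q : ℤ) ∣ K ! * (t * u) :=
      (Int.natCast_dvd_natCast.mpr (Nat.dvd_factorial hq.pos hqK)).mul_right _
    simpa using (dvd_sub hqw' hqK')
  exact hq.one_lt.ne' (by exact_mod_cast Int.eq_one_of_dvd_one (by positivity) hq1)

theorem Polynomial.exists_mul_add_mul_eq_C_of_isCoprime_map_s12 {f h : ℤ[X]}
    (hfh : IsCoprime (f.map (algebraMap ℤ ℚ)) (h.map (algebraMap ℤ ℚ))) :
    ∃ (A B : ℤ[X]) (c : ℤ), c ≠ 0 ∧ A * f + B * h = C c := by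
  obtain ⟨a, b, hab⟩ := hfh
  obtain ⟨na, hna, ha⟩ := IsLocalization.integerNormalization_spec (nonZeroDivisors ℤ) a
  obtain ⟨nb, hnb, hb⟩ := IsLocalization.integerNormalization_spec (nonZeroDivisors ℤ) b
  refine ⟨C nb * IsLocalization.integerNormalization (nonZeroDivisors ℤ) a,
    C na * IsLocalization.integerNormalization (nonZeroDivisors ℤ) b, na * nb,
    mul_ne_zero (nonZeroDivisors.ne_zero hna) (nonZeroDivisors.ne_zero hnb), ?_⟩
  apply map_injective (algebraMap ℤ ℚ) (RingHom.injective_int _)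
  simp only [Polynomial.map_add, Polynomial.map_mul, map_C, ha, hb, zsmul_eq_mul]
  simp only [algebraMap_int_eq, eq_intCast, Int.cast_mul, C_mul, C_eq_intCast]
  linear_combination ((na : ℚ[X]) * nb) * hab

theorem Polynomial.dvd_of_forall_prime_dvd_eval {f h : ℤ[X]} (hprim : f.IsPrimitive)
    (hirr : Irreducible f) (K : ℕ)
    (H : ∀ q : ℕ, q.Prime → K < q → ∀ m : ℤ, (q : ℤ) ∣ f.eval m → (q : ℤ) ∣ h.eval m) :
    f ∣ h := by
  by_contra hfh
  have hirrℚ : Irreducible (f.map (algebraMap ℤ ℚ)) :=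
    hprim.irreducible_iff_irreducible_map_fraction_map.mp hirr
  have hcop : IsCoprime (f.map (algebraMap ℤ ℚ)) (h.map (algebraMap ℤ ℚ)) :=
    hirrℚ.coprime_iff_not_dvd.mpr (mt (hprim.dvd_iff_fraction_map_dvd_fraction_map ℚ).mpr hfh)
  obtain ⟨A, B, c, hc, hABc⟩ := exists_mul_add_mul_eq_C_of_isCoprime_map_s12 hcop
  have hdeg : 0 < f.degree := by
    rw [← degree_map_eq_of_injective (RingHom.injective_int (algebraMap ℤ ℚ))]
    exact natDegree_pos_iff_degree_pos.mp hirrℚ.natDegree_pos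
  obtain ⟨q, hq, hqK, m, hqm⟩ := exists_prime_gt_dvd_eval_s12 hdeg (max K c.natAbs)
  have hqc : (q : ℤ) ∣ c := by
    have := congrArg (eval m) hABc
    rw [eval_add, eval_mul, eval_mul, eval_C] at this
    exact this ▸ dvd_add (hqm.mul_left _)
      ((H q hq ((le_max_left _ _).trans_lt hqK) m hqm).mul_left _)
  exact ((le_max_right _ _).trans_lt hqK).not_ge
    (Nat.le_of_dvd (Int.natAbs_pos.mpr hc) (Int.natCast_dvd.mp hqc))

theorem Squarefree.dvd_of_forall_prime_dvd {α : Type*} [CommMonoidWithZero α]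
    [Nontrivial α] [UniqueFactorizationMonoid α] {a b : α} (ha : Squarefree a)
    (h : ∀ p, Prime p → p ∣ a → p ∣ b) : a ∣ b := by
  induction a using UniqueFactorizationMonoid.induction_on_prime with
  | h₁ => exact absurd ha not_squarefree_zero
  | h₂ u hu => exact hu.dvd
  | h₃ a p _ hp ih =>
    exact (IsRelPrime.of_squarefree_mul ha).mul_dvd (h p hp (dvd_mul_right p a))
      (ih ha.of_mul_right fun r hr hra => h r hr (hra.mul_left p))

theorem Polynomial.isRoot_map_intCast_iff_s12 {g : ℤ[X]} {q : ℕ} {m : ℤ} :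
    (g.map (Int.castRingHom (ZMod q))).IsRoot m ↔ (q : ℤ) ∣ g.eval m := by
  rw [IsRoot.def, eval_intCast_map, eq_intCast, ZMod.intCast_zmod_eq_zero_iff_dvd, Int.cast_id]

theorem ZMod.orderOf_pos {p : ℕ} [Fact p.Prime] {a : ZMod p} (ha : a ≠ 0) : 0 < orderOf a :=
  Nat.pos_of_dvd_of_pos (ZMod.orderOf_dvd_card_sub_one ha)
    (Nat.sub_pos_of_lt (Fact.out : p.Prime).one_lt)

section PrimePowerCondition

variable {g : ℤ[X]} {N₀ : ℕ}
  (hdvd : ∀ p : ℕ, p.Prime → N₀ ≤ p → ∀ q : ℕ, q.Prime →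
    (q : ℤ) ∣ g.eval (p : ℤ) → (q : ℤ) ∣ g.eval ((p : ℤ) ^ p))
  {q : ℕ} [Fact q.Prime] {r : ZMod q}
include hdvd

theorem isRoot_pow_of_coprime_orderOf_s12 (hr : r ≠ 0)
    (hroot : (g.map (Int.castRingHom (ZMod q))).IsRoot r) {j : ℕ} (hj : j.Coprime (orderOf r)) :
    (g.map (Int.castRingHom (ZMod q))).IsRoot (r ^ j) := by
  have hq : q.Prime := Fact.out
  have hcop : q.Coprime (orderOf r) :=
    ((Nat.coprime_self_sub_right hq.one_lt.le).mpr (Nat.coprime_one_right q)).coprime_dvd_right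
      (ZMod.orderOf_dvd_card_sub_one hr)
  have : NeZero (q * orderOf r) := ⟨(Nat.mul_pos hq.pos (ZMod.orderOf_pos hr)).ne'⟩
  set crt := ZMod.chineseRemainder hcop
  have hunit : IsUnit (crt.symm (r, j)) :=
    (Prod.isUnit_iff.mpr ⟨hr.isUnit, (ZMod.unitOfCoprime j hj).isUnit⟩).map crt.symm
  obtain ⟨p, hpN, hp, hpr⟩ := Nat.forall_exists_prime_gt_and_eq_mod hunit N₀
  obtain ⟨hpq, hpj⟩ : (p : ZMod q) = r ∧ (p : ZMod (orderOf r)) = j := by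
    simpa [Prod.ext_iff, crt] using congrArg crt hpr
  have hrp : r ^ p = r ^ j := by
    rw [← pow_mod_orderOf, ← pow_mod_orderOf r j, (ZMod.natCast_eq_natCast_iff' _ _ _).mp hpj]
  have hgp : (q : ℤ) ∣ g.eval (p : ℤ) := by
    rw [← isRoot_map_intCast_iff_s12, Int.cast_natCast, hpq]; exact hroot
  have := isRoot_map_intCast_iff_s12.mpr (hdvd p hp hpN.le q hq hgp)
  rwa [Int.cast_pow, Int.cast_natCast, hpq, hrp] at this

theorem totient_orderOf_le_natDegree (hg : g.Monic) (hr : r ≠ 0)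
    (hroot : (g.map (Int.castRingHom (ZMod q))).IsRoot r) : φ (orderOf r) ≤ g.natDegree := by
  set d := orderOf r
  have hd : 0 < d := ZMod.orderOf_pos hr
  have : NeZero d := ⟨hd.ne'⟩
  have hprim : IsPrimitiveRoot r d := IsPrimitiveRoot.orderOf r
  have hsub : primitiveRoots d (ZMod q) ⊆ (g.map (Int.castRingHom (ZMod q))).roots.toFinset := by
    intro ζ hζ
    obtain ⟨i, -, rfl⟩ := hprim.eq_pow_of_pow_eq_one ((mem_primitiveRoots hd).mp hζ).pow_eq_one
    have hi : i.Coprime d := (hprim.pow_iff_coprime hd i).mp ((mem_primitiveRoots hd).mp hζ)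
    rw [Multiset.mem_toFinset, mem_roots (hg.map _).ne_zero]
    exact isRoot_pow_of_coprime_orderOf_s12 hdvd hr hroot hi
  calc φ d = (primitiveRoots d (ZMod q)).card := hprim.card_primitiveRoots.symm
    _ ≤ (g.map (Int.castRingHom (ZMod q))).roots.toFinset.card := Finset.card_le_card hsub
    _ ≤ (g.map (Int.castRingHom (ZMod q))).natDegree :=
      (Multiset.toFinset_card_le _).trans (card_roots' _)
    _ = g.natDegree := hg.natDegree_map _

theorem pow_factorial_two_mul_natDegree_sq_eq_one (hg : g.Monic) (hr : r ≠ 0)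
    (hroot : (g.map (Int.castRingHom (ZMod q))).IsRoot r) : r ^ (2 * g.natDegree ^ 2)! = 1 := by
  have hd : 0 < orderOf r := ZMod.orderOf_pos hr
  have hle : orderOf r ≤ 2 * g.natDegree ^ 2 :=
    (Nat.le_two_mul_totient_sq_s12 _).trans (by
      gcongr; exact totient_orderOf_le_natDegree hdvd hg hr hroot)
  exact orderOf_dvd_iff_pow_eq_one.mp (Nat.dvd_factorial hd hle)

end PrimePowerCondition

theorem stmt_12_general (g : Polynomial ℤ) (hg : g.Monic) (hsf : Squarefree g)
    (hg0 : g.eval 0 ≠ 0) (N₀ : ℕ)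
    (hdvd : ∀ p : ℕ, p.Prime → N₀ ≤ p → ∀ q : ℕ, q.Prime →
      (q : ℤ) ∣ g.eval (p : ℤ) → (q : ℤ) ∣ g.eval ((p : ℤ) ^ p)) :
    ∃ M : ℕ, 0 < M ∧ g ∣ (X ^ M - 1 : Polynomial ℤ) := by
  refine ⟨(2 * g.natDegree ^ 2)!, Nat.factorial_pos _,
    hsf.dvd_of_forall_prime_dvd fun f hf hfg => ?_⟩
  refine dvd_of_forall_prime_dvd_eval (isPrimitive_of_dvd hg.isPrimitive hfg) hf.irreducible
    (g.eval 0).natAbs fun q hq hq0 m hfm => ?_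
  have : Fact q.Prime := ⟨hq⟩
  have hroot : (g.map (Int.castRingHom (ZMod q))).IsRoot m :=
    isRoot_map_intCast_iff_s12.mpr (hfm.trans (eval_dvd hfg))
  have hm : (m : ZMod q) ≠ 0 := by
    intro h0
    rw [h0, ← Int.cast_zero, isRoot_map_intCast_iff_s12] at hroot
    exact hq0.not_ge (Nat.le_of_dvd (Int.natAbs_pos.mpr hg0) (Int.natCast_dvd.mp hroot))
  rw [← isRoot_map_intCast_iff_s12]
  simp [pow_factorial_two_mul_natDegree_sq_eq_one hdvd hg hm hroot]

/-- **Lemma 5.2.** Let `g ∈ ℤ[x]` be monic and squarefree with `g(0) ≠ 0` and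
`deg g ≥ 1`, and suppose there is a positive integer `N₀` such that for every prime `p ≥ N₀`
and every prime `q`, `q ∣ g(p)` implies `q ∣ g(p^p)`. Then `g(x) ∣ x^M - 1` for some positive
integer `M`. -/
theorem stmt_12 (g : Polynomial ℤ) (hg : g.Monic) (hsf : Squarefree g)
    (hg0 : g.eval 0 ≠ 0) (hdeg : 1 ≤ g.natDegree) (N₀ : ℕ) (hN₀ : 0 < N₀)
    (hdvd : ∀ p : ℕ, p.Prime → N₀ ≤ p → ∀ q : ℕ, q.Prime →
      (q : ℤ) ∣ g.eval (p : ℤ) → (q : ℤ) ∣ g.eval ((p : ℤ) ^ p)) :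
    ∃ M : ℕ, 0 < M ∧ g ∣ (X ^ M - 1 : Polynomial ℤ) :=
  stmt_12_general g hg hsf hg0 N₀ hdvd
end

section
/- Let h(x) = Φ_{d₁}(x)^{e₁} · Φ_{d₂}(x)^{e₂} ⋯ Φ_{d_m}(x)^{e_m} with d₁,…,d_m distinct positive integers and e₁,…,e_m positive integers, and suppose h(p) ∣ h(p^p) for every prime p. Let 𝒜 = {d₁,…,d_m}, and let p_k be the largest prime dividing lcm(d₁,…,d_m). Let d ∈ 𝒜 be such that p_k ∣ d, and let p_i be a prime with p_i ∣ d and (p_i, d) ≠ (2,6). Then d/p_i ∈ 𝒜. -/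
/-!
Let `q` be a primitive prime divisor of `p ^ d - 1` for `p = pi`, i.e. a prime `q ∤ d` dividing
`Φ_d(p)`; it exists by Zsigmondy's theorem since `(p, d) ≠ (2, 6)`. The order of `p` modulo `q` is
`d`, so `d ∣ q - 1` and `q > pk`. Now `q ∣ Φ_d(p) ∣ h(p) ∣ h(p ^ p)`, so `q ∣ Φ_{d'}(p ^ p)` for
some `d' ∈ 𝒜`; as `q > pk`, `q ∤ d'`, so `d'` is the order of `p ^ p` modulo `q`, which is `d / p`.

Zsigmondy's theorem for `Φ_n(a)` has the classical proof: if every prime factor of `Φ_n(a)` divided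
`n`, each would be the largest prime factor `q` of `n`; since moreover `q ^ 2 ∤ Φ_n(a)`, we would
get `Φ_n(a) = q`, contradicting the growth of `Φ_n(a)` in `a` and `n`.
-/

open Polynomial Finset

theorem natCast_dvd_cyclotomic_eval_iff_isRoot {n : ℕ} {a : ℤ} (q : ℕ) :
    (q : ℤ) ∣ (cyclotomic n ℤ).eval a ↔ (cyclotomic n (ZMod q)).IsRoot (a : ZMod q) := by
  rw [IsRoot.def, ← map_cyclotomic_int n (ZMod q), eval_intCast_map, eq_intCast,
    ZMod.intCast_zmod_eq_zero_iff_dvd, Int.cast_id]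

section OrderModPrime

variable {q n : ℕ} [hq : Fact q.Prime] {a : ℤ}

theorem ne_zero_of_dvd_cyclotomic_eval (h : (q : ℤ) ∣ (cyclotomic n ℤ).eval a) : n ≠ 0 := by
  rintro rfl
  rw [cyclotomic_zero, eval_one, ← Nat.cast_one, Int.natCast_dvd_natCast, Nat.dvd_one] at h
  exact hq.out.ne_one h

theorem orderOf_eq_ordCompl_of_dvd_cyclotomic_eval (h : (q : ℤ) ∣ (cyclotomic n ℤ).eval a) :
    orderOf (a : ZMod q) = ordCompl[q] n := by
  have hn := ne_zero_of_dvd_cyclotomic_eval h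
  have : NeZero ((ordCompl[q] n : ℕ) : ZMod q) :=
    ⟨by rw [Ne, ZMod.natCast_eq_zero_iff]; exact Nat.not_dvd_ordCompl hq.out hn⟩
  rw [natCast_dvd_cyclotomic_eval_iff_isRoot, ← Nat.ordProj_mul_ordCompl_eq_self n q,
    isRoot_cyclotomic_prime_pow_mul_iff_of_charP] at h
  exact h.eq_orderOf.symm

theorem ordCompl_dvd_sub_one_of_dvd_cyclotomic_eval (h : (q : ℤ) ∣ (cyclotomic n ℤ).eval a) :
    ordCompl[q] n ∣ q - 1 := by
  have hord := orderOf_eq_ordCompl_of_dvd_cyclotomic_eval h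
  rw [← hord]
  refine ZMod.orderOf_dvd_card_sub_one fun ha => ?_
  have := Nat.ordCompl_pos q (ne_zero_of_dvd_cyclotomic_eval h)
  rw [← hord, ha, orderOf_eq_zero_iff'.2 fun k hk => by simp [zero_pow hk.ne']] at this
  exact this.false

theorem orderOf_eq_of_dvd_cyclotomic_eval (hqn : ¬ q ∣ n)
    (h : (q : ℤ) ∣ (cyclotomic n ℤ).eval a) : orderOf (a : ZMod q) = n := by
  rw [orderOf_eq_ordCompl_of_dvd_cyclotomic_eval h, Nat.factorization_eq_zero_of_not_dvd hqn,
    pow_zero, Nat.div_one]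

theorem dvd_sub_one_of_dvd_cyclotomic_eval (hqn : ¬ q ∣ n)
    (h : (q : ℤ) ∣ (cyclotomic n ℤ).eval a) : n ∣ q - 1 := by
  simpa [Nat.factorization_eq_zero_of_not_dvd hqn] using
    ordCompl_dvd_sub_one_of_dvd_cyclotomic_eval h

theorem prime_le_of_dvd_cyclotomic_eval (h : (q : ℤ) ∣ (cyclotomic n ℤ).eval a) {s : ℕ}
    (hs : s.Prime) (hsn : s ∣ n) : s ≤ q := by
  rcases eq_or_ne s q with rfl | hsq
  · exact le_rfl
  have hcop : s.Coprime (q ^ n.factorization q) :=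
    ((Nat.coprime_primes hs hq.out).2 hsq).pow_right _
  have hs_compl : s ∣ ordCompl[q] n :=
    hcop.dvd_of_dvd_mul_left (by rwa [Nat.ordProj_mul_ordCompl_eq_self])
  have := Nat.le_of_dvd (Nat.sub_pos_of_lt hq.out.one_lt)
    (hs_compl.trans (ordCompl_dvd_sub_one_of_dvd_cyclotomic_eval h))
  omega

end OrderModPrime

theorem not_sq_dvd_geom_sum_of_dvd_sub_one_s13 {q : ℕ} (hq : q.Prime) {x : ℤ} (hx : (q : ℤ) ∣ x - 1)
    (h2 : q = 2 → 4 ∣ x - 1) : ¬ (q : ℤ) ^ 2 ∣ ∑ i ∈ range q, x ^ i := by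
  rcases hq.eq_two_or_odd' with rfl | hodd
  · have := h2 rfl
    simp only [sum_range_succ, sum_range_zero, pow_zero, pow_one, zero_add]
    omega
  · obtain ⟨b, hb⟩ := hx
    have hsum := odd_sq_dvd_geom_sum₂_sub (R := ℤ) 1 b hodd
    simp only [one_pow, mul_one, ← hb, add_sub_cancel] at hsum
    rintro hsq
    have hqq : q ^ 2 ∣ q ^ 1 := by
      rw [pow_one]; exact_mod_cast (dvd_sub_right hsq).1 hsum
    have := (Nat.pow_dvd_pow_iff_le_right hq.one_lt).1 hqq
    omega

theorem cyclotomic_eval_dvd_geom_sum {a : ℤ} (ha : 1 < a) {c r : ℕ} (hc : 0 < c) (hr : 1 < r) :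
    (cyclotomic (c * r) ℤ).eval a ∣ ∑ i ∈ range r, (a ^ c) ^ i := by
  have hc_mem : c ∈ (c * r).properDivisors :=
    Nat.mem_properDivisors.2 ⟨dvd_mul_right c r, lt_mul_of_one_lt_right hc hr⟩
  have h := eval_dvd (x := a) (X_pow_sub_one_mul_cyclotomic_dvd_X_pow_sub_one_of_dvd ℤ hc_mem)
  simp only [eval_mul, eval_sub, eval_pow, eval_X, eval_one] at h
  rw [pow_mul, ← geom_sum_mul (a ^ c) r, mul_comm] at h
  exact (mul_dvd_mul_iff_right (sub_ne_zero.2 (one_lt_pow₀ ha hc.ne').ne')).1 h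

theorem four_dvd_pow_sub_one_of_two_dvd_cyclotomic_eval {a : ℤ} {c : ℕ} (hc : 1 < c)
    (h : (2 : ℤ) ∣ (cyclotomic (2 * c) ℤ).eval a) : 4 ∣ a ^ c - 1 := by
  have : Fact (Nat.Prime 2) := ⟨Nat.prime_two⟩
  have hcompl : ordCompl[2] (2 * c) = 1 :=
    Nat.dvd_one.1 (ordCompl_dvd_sub_one_of_dvd_cyclotomic_eval (q := 2) (by exact_mod_cast h))
  have hc_even : 2 ∣ c := by
    by_contra hc_odd
    have := Nat.ordCompl_self_pow_mul c 1 Nat.prime_two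
    rw [pow_one, hcompl,
      (Nat.ordCompl_eq_self_iff_zero_or_not_dvd c Nat.prime_two).2 (Or.inr hc_odd)] at this
    omega
  have ha_odd : Odd a := by
    rw [← ZMod.intCast_eq_one_iff_odd, ← orderOf_eq_one_iff,
      orderOf_eq_ordCompl_of_dvd_cyclotomic_eval (q := 2) (by exact_mod_cast h), hcompl]
  obtain ⟨t, rfl⟩ := hc_even
  have := Int.sq_mod_four_eq_one_of_odd (ha_odd.pow (n := t))
  rw [pow_mul']
  omega

theorem not_sq_dvd_cyclotomic_eval {q n : ℕ} [hq : Fact q.Prime] {a : ℤ} (hn : 2 < n) (ha : 1 < a)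
    (hqn : q ∣ n) (h : (q : ℤ) ∣ (cyclotomic n ℤ).eval a) :
    ¬ (q : ℤ) ^ 2 ∣ (cyclotomic n ℤ).eval a := by
  obtain ⟨c, rfl⟩ := hqn
  have hc : 0 < c := Nat.pos_of_ne_zero (by rintro rfl; simp at hn)
  have hcompl : ordCompl[q] (q * c) ∣ c :=
    (Nat.coprime_ordCompl hq.out (by omega)).symm.dvd_of_dvd_mul_left (Nat.ordCompl_dvd _ _)
  have hx : (q : ℤ) ∣ a ^ c - 1 := by
    rw [← ZMod.intCast_zmod_eq_zero_iff_dvd, Int.cast_sub, Int.cast_pow, Int.cast_one, sub_eq_zero,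
      ← orderOf_dvd_iff_pow_eq_one, orderOf_eq_ordCompl_of_dvd_cyclotomic_eval h]
    exact hcompl
  have h2 : q = 2 → 4 ∣ a ^ c - 1 := by
    rintro rfl
    exact four_dvd_pow_sub_one_of_two_dvd_cyclotomic_eval (by omega) (by exact_mod_cast h)
  -- `Φ_{qc}(a)` divides `1 + x + ⋯ + x ^ (q - 1)` with `x = a ^ c ≡ 1 [ZMOD q]`,
  -- and that sum is `≡ q` modulo `q ^ 2`.
  intro hsq
  refine not_sq_dvd_geom_sum_of_dvd_sub_one_s13 hq.out hx h2 (hsq.trans ?_)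
  rw [mul_comm]
  exact cyclotomic_eval_dvd_geom_sum ha hc hq.out.one_lt

theorem sub_one_pow_totient_lt_cyclotomic_eval_natCast {n a : ℕ} (hn : 1 < n) (ha : 1 < a) :
    (((a - 1) ^ n.totient : ℕ) : ℤ) < (cyclotomic n ℤ).eval (a : ℤ) := by
  rw [← Int.natAbs_of_nonneg (cyclotomic_pos' n (by exact_mod_cast ha : (1 : ℤ) < a)).le]
  exact_mod_cast sub_one_pow_totient_lt_natAbs_cyclotomic_eval hn ha.ne'

theorem cyclotomic_eval_le_add_one_pow_totient_intCast (n : ℕ) {a : ℤ} (ha : 1 < a) :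
    (cyclotomic n ℤ).eval a ≤ (a + 1) ^ n.totient := by
  have h := cyclotomic_eval_le_add_one_pow_totient (by exact_mod_cast ha : (1 : ℝ) < a) n
  rw [← map_cyclotomic_int, eval_intCast_map, eq_intCast] at h
  exact_mod_cast h

theorem cyclotomic_eval_eq_prime_of_forall_dvd {n a : ℕ} (hn : 2 < n) (ha : 1 < a)
    (hall : ∀ r : ℕ, r.Prime → (r : ℤ) ∣ (cyclotomic n ℤ).eval (a : ℤ) → r ∣ n) :
    ∃ q : ℕ, q.Prime ∧ q ∣ n ∧ (cyclotomic n ℤ).eval (a : ℤ) = q := by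
  have ha' : (1 : ℤ) < a := by exact_mod_cast ha
  obtain ⟨N, hN⟩ := Int.eq_ofNat_of_zero_le (cyclotomic_pos' n ha').le
  have hN1 : 1 < N := by
    have := sub_one_pow_totient_lt_cyclotomic_eval_natCast (n := n) (by omega) ha
    have := Nat.one_le_pow n.totient (a - 1) (by omega)
    omega
  rw [hN] at hall ⊢
  simp only [Int.natCast_dvd_natCast] at hall
  set q := N.minFac
  have hq : q.Prime := Nat.minFac_prime hN1.ne'
  have : Fact q.Prime := ⟨hq⟩
  have hqN : (q : ℤ) ∣ (cyclotomic n ℤ).eval (a : ℤ) := by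
    rw [hN]; exact_mod_cast N.minFac_dvd
  have huniq : ∀ {r : ℕ}, r.Prime → r ∣ N → r = q := by
    intro r hr hrN
    have : Fact r.Prime := ⟨hr⟩
    refine le_antisymm (prime_le_of_dvd_cyclotomic_eval hqN hr (hall r hr hrN)) ?_
    refine prime_le_of_dvd_cyclotomic_eval (a := a) ?_ hq (hall _ hq N.minFac_dvd)
    rw [hN]; exact_mod_cast hrN
  have hsq := not_sq_dvd_cyclotomic_eval hn ha' (hall _ hq N.minFac_dvd) hqN
  refine ⟨q, hq, hall _ hq N.minFac_dvd, ?_⟩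
  obtain ⟨k, hk⟩ : ∃ k, N = q ^ k := ⟨_, Nat.eq_prime_pow_of_unique_prime_dvd (by omega) huniq⟩
  rw [hN, hk] at hsq
  rw [hk] at hN1 ⊢
  rcases k with _ | _ | k
  · simp at hN1
  · simp
  · exact absurd (by exact_mod_cast pow_dvd_pow q (by omega : 2 ≤ k + 2)) hsq

theorem add_two_le_two_pow {q : ℕ} (hq : 2 ≤ q) : q + 2 ≤ 2 ^ q := by
  induction q, hq using Nat.le_induction with
  | base => norm_num
  | succ q _ ih => rw [pow_succ]; omega

theorem three_mul_add_one_le_two_pow {q : ℕ} (hq : 5 ≤ q) : 3 * q + 1 ≤ 2 ^ q := by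
  induction q, hq using Nat.le_induction with
  | base => norm_num
  | succ q _ ih => rw [pow_succ]; omega

theorem prime_lt_cyclotomic_eval_of_three_le {n a q : ℕ} (ha : 3 ≤ a) (hq : q.Prime)
    (hqn : q ∣ n) (hn : n ≠ 0) : (q : ℤ) < (cyclotomic n ℤ).eval (a : ℤ) := by
  have htot : q - 1 ∣ n.totient := Nat.totient_prime hq ▸ Nat.totient_dvd_of_dvd hqn
  have hq_le : q ≤ (a - 1) ^ n.totient :=
    calc q ≤ n.totient + 1 := by
          have := Nat.le_of_dvd (Nat.totient_pos.2 (Nat.pos_of_ne_zero hn)) htot; omega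
      _ ≤ 2 ^ n.totient := Nat.lt_two_pow_self
      _ ≤ (a - 1) ^ n.totient := Nat.pow_le_pow_left (by omega) _
  have hn1 : 1 < n := hq.one_lt.trans_le (Nat.le_of_dvd (Nat.pos_of_ne_zero hn) hqn)
  exact lt_of_le_of_lt (by exact_mod_cast hq_le)
    (sub_one_pow_totient_lt_cyclotomic_eval_natCast hn1 (by omega))

theorem prime_lt_cyclotomic_eval_two_mul_of_dvd {m q : ℕ} (hq : q.Prime) (hqm : q ∣ m)
    (hm : m ≠ 0) : (q : ℤ) < (cyclotomic (m * q) ℤ).eval 2 := by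
  rw [← cyclotomic_expand_eq_cyclotomic hq hqm, expand_eval]
  have hlow := sub_one_pow_totient_lt_cyclotomic_eval_natCast
    (hq.one_lt.trans_le (Nat.le_of_dvd (Nat.pos_of_ne_zero hm) hqm))
    (Nat.one_lt_two_pow hq.ne_zero)
  have hq_le : q < (2 ^ q - 1) ^ m.totient :=
    calc q < 2 ^ q - 1 := by have := add_two_le_two_pow hq.two_le; omega
      _ ≤ (2 ^ q - 1) ^ m.totient :=
          Nat.le_self_pow (Nat.totient_pos.2 (Nat.pos_of_ne_zero hm)).ne' _
  push_cast at hlow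
  exact lt_trans (by exact_mod_cast hq_le) hlow

theorem prime_lt_cyclotomic_eval_two_mul_of_not_dvd {m q : ℕ} (hq : q.Prime) (hq5 : 5 ≤ q)
    (hm : 1 < m) (hqm : ¬ q ∣ m) : (q : ℤ) < (cyclotomic (m * q) ℤ).eval 2 := by
  have hexpand : (cyclotomic m ℤ).eval (2 ^ q) =
      (cyclotomic (m * q) ℤ).eval 2 * (cyclotomic m ℤ).eval 2 := by
    simpa [expand_eval] using congrArg (eval 2) (cyclotomic_expand_eq_cyclotomic_mul hq hqm ℤ)
  have hlow := sub_one_pow_totient_lt_cyclotomic_eval_natCast hm (Nat.one_lt_two_pow hq.ne_zero)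
  have hup := cyclotomic_eval_le_add_one_pow_totient_intCast m (one_lt_two : (1 : ℤ) < 2)
  have hpos := cyclotomic_pos' m (one_lt_two : (1 : ℤ) < 2)
  have hpow : q * 3 ^ m.totient ≤ (2 ^ q - 1) ^ m.totient :=
    calc q * 3 ^ m.totient ≤ q ^ m.totient * 3 ^ m.totient :=
          Nat.mul_le_mul_right _ (Nat.le_self_pow (Nat.totient_pos.2 (by omega)).ne' _)
      _ = (3 * q) ^ m.totient := by rw [mul_pow, mul_comm]
      _ ≤ (2 ^ q - 1) ^ m.totient :=
          Nat.pow_le_pow_left (by have := three_mul_add_one_le_two_pow hq5; omega) _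
  push_cast at hlow hexpand hpow
  norm_num at hup
  rw [hexpand] at hlow
  -- `q Φ_m(2) ≤ q 3 ^ φ(m) ≤ (2 ^ q - 1) ^ φ(m) < Φ_m(2 ^ q) = Φ_{mq}(2) Φ_m(2)`
  nlinarith

theorem prime_lt_cyclotomic_eval_two {q n : ℕ} [hq : Fact q.Prime] (hqn : q ∣ n)
    (h : (q : ℤ) ∣ (cyclotomic n ℤ).eval 2) (h6 : n ≠ 6) : (q : ℤ) < (cyclotomic n ℤ).eval 2 := by
  have hn := ne_zero_of_dvd_cyclotomic_eval h
  obtain ⟨m, rfl⟩ := hqn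
  have hm : m ≠ 0 := by rintro rfl; simp at hn
  rw [mul_comm]
  by_cases hqm : q ∣ m
  · exact prime_lt_cyclotomic_eval_two_mul_of_dvd hq.out hqm hm
  have hcompl : ordCompl[q] (q * m) = m := by
    simpa using Nat.ordCompl_pow_mul_of_not_dvd 1 hq.out hqm
  have hord : orderOf (2 : ZMod q) = m := by
    simpa [hcompl] using orderOf_eq_ordCompl_of_dvd_cyclotomic_eval (a := 2) h
  have hm1 : m ≠ 1 := by
    rintro rfl
    rw [orderOf_eq_one_iff, ← sub_eq_zero] at hord
    norm_num at hord
  have hmq : m ∣ q - 1 := hcompl ▸ ordCompl_dvd_sub_one_of_dvd_cyclotomic_eval h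
  have hq3 : 3 ≤ q := by
    have := hq.out.two_le
    have := Nat.le_of_dvd (by omega) hmq
    omega
  obtain rfl | rfl | hq5 : q = 3 ∨ q = 4 ∨ 5 ≤ q := by omega
  · have := Nat.le_of_dvd (by norm_num) hmq
    omega
  · exact absurd hq.out (by decide)
  · exact prime_lt_cyclotomic_eval_two_mul_of_not_dvd hq.out hq5 (by omega) hqm

theorem exists_prime_dvd_cyclotomic_eval_not_dvd {n a : ℕ} (hn : 2 < n) (ha : 1 < a)
    (h26 : ¬(a = 2 ∧ n = 6)) :
    ∃ q : ℕ, q.Prime ∧ ¬ q ∣ n ∧ (q : ℤ) ∣ (cyclotomic n ℤ).eval (a : ℤ) := by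
  by_contra! hall
  obtain ⟨q, hq, hqn, hΦ⟩ :=
    cyclotomic_eval_eq_prime_of_forall_dvd hn ha fun r hr hrΦ => by_contra fun h => hall r hr h hrΦ
  have : Fact q.Prime := ⟨hq⟩
  suffices (q : ℤ) < (cyclotomic n ℤ).eval (a : ℤ) from this.ne' hΦ
  obtain rfl | ha3 : a = 2 ∨ 3 ≤ a := by omega
  · rw [Nat.cast_ofNat] at hΦ ⊢
    exact prime_lt_cyclotomic_eval_two hqn hΦ.symm.dvd (by omega)
  · exact prime_lt_cyclotomic_eval_of_three_le ha3 hq hqn (by omega)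

theorem Nat.Prime.exists_prime_dvd_cyclotomic_eval_not_dvd {p d : ℕ} (hp : p.Prime) (hpd : p ∣ d)
    (hd : d ≠ 0) (h26 : ¬(p = 2 ∧ d = 6)) :
    ∃ q : ℕ, q.Prime ∧ ¬ q ∣ d ∧ (q : ℤ) ∣ (cyclotomic d ℤ).eval (p : ℤ) := by
  have hpd_le := Nat.le_of_dvd (Nat.pos_of_ne_zero hd) hpd
  obtain hd2 | hd2 : d = 2 ∨ 2 < d := by have := hp.two_le; omega
  · obtain rfl : p = 2 := by have := hp.two_le; omega
    exact ⟨3, Nat.prime_three, by omega, by simp [hd2, cyclotomic_two]⟩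
  · exact _root_.exists_prime_dvd_cyclotomic_eval_not_dvd hd2 hp.one_lt h26

theorem cyclotomic_eval_dvd_eval_prod_pow {ι : Type*} {s : Finset ι} {f e : ι → ℕ} {i : ι}
    (hi : i ∈ s) (he : e i ≠ 0) (a : ℤ) :
    (cyclotomic (f i) ℤ).eval a ∣ (∏ j ∈ s, cyclotomic (f j) ℤ ^ e j).eval a := by
  rw [eval_prod]
  refine (dvd_pow_self _ he).trans ?_
  rw [← eval_pow]
  exact dvd_prod_of_mem _ hi

theorem exists_dvd_cyclotomic_eval_of_dvd_eval_prod_pow {ι : Type*} {s : Finset ι} {f e : ι → ℕ}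
    {q : ℕ} (hq : q.Prime) {a : ℤ} (h : (q : ℤ) ∣ (∏ j ∈ s, cyclotomic (f j) ℤ ^ e j).eval a) :
    ∃ j ∈ s, (q : ℤ) ∣ (cyclotomic (f j) ℤ).eval a := by
  have hq' := Nat.prime_iff_prime_int.1 hq
  rw [eval_prod] at h
  obtain ⟨j, hj, hdvd⟩ := hq'.exists_mem_finset_dvd h
  exact ⟨j, hj, hq'.dvd_of_dvd_pow (by rwa [eval_pow] at hdvd)⟩

theorem stmt_13_general (m : ℕ) (dfun : Fin m → ℕ) (e : Fin m → ℕ)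
    (he : ∀ i, 0 < e i)
    (h : Polynomial ℤ) (hh : h = ∏ i, (cyclotomic (dfun i) ℤ) ^ (e i))
    (hdvd : ∀ p : ℕ, p.Prime → h.eval (p : ℤ) ∣ h.eval ((p : ℤ) ^ p))
    (pk : ℕ)
    (hpkmax : ∀ q : ℕ, q.Prime → q ∣ Finset.univ.lcm dfun → q ≤ pk)
    (d : ℕ) (hdA : ∃ i, dfun i = d) (hpkd : pk ∣ d)
    (pi : ℕ) (hpi : pi.Prime) (hpid : pi ∣ d) (hpi26 : ¬(pi = 2 ∧ d = 6)) :
    ∃ j, dfun j = d / pi := by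
  obtain ⟨i, rfl⟩ := hdA
  rcases eq_or_ne (dfun i) 0 with hd0 | hd0
  · exact ⟨i, by rw [hd0, Nat.zero_div]⟩
  obtain ⟨q, hq, hqd, hqΦ⟩ := hpi.exists_prime_dvd_cyclotomic_eval_not_dvd hpid hd0 hpi26
  have : Fact q.Prime := ⟨hq⟩
  have hqh : (q : ℤ) ∣ h.eval ((pi : ℤ) ^ pi) :=
    (hqΦ.trans (hh ▸ cyclotomic_eval_dvd_eval_prod_pow (mem_univ i) (he i).ne' _)).trans
      (hdvd pi hpi)
  obtain ⟨j, -, hqj⟩ := exists_dvd_cyclotomic_eval_of_dvd_eval_prod_pow hq (hh ▸ hqh)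
  have hpk_lt : pk < q := by
    have := Nat.le_of_dvd (Nat.sub_pos_of_lt hq.one_lt)
      (hpkd.trans (dvd_sub_one_of_dvd_cyclotomic_eval hqd hqΦ))
    have := hq.one_lt
    omega
  have hqdj : ¬ q ∣ dfun j := fun hqdj =>
    (hpkmax q hq (hqdj.trans (Finset.dvd_lcm (mem_univ j)))).not_gt hpk_lt
  refine ⟨j, ?_⟩
  have hord := orderOf_eq_of_dvd_cyclotomic_eval hqd hqΦ
  rw [← orderOf_eq_of_dvd_cyclotomic_eval hqdj hqj, Int.cast_pow, orderOf_pow' _ hpi.ne_zero,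
    hord, Nat.gcd_eq_right hpid]

/-- **Lemma 5.3.** Let `h = Φ_{d₁}^{e₁} ⋯ Φ_{d_m}^{e_m}` with `d₁, …, d_m`
distinct positive integers and `e₁, …, e_m` positive integers, and suppose `h(p) ∣ h(p^p)` for
every prime `p`. Let `𝒜 = {d₁,…,d_m}` and let `pk` be the largest prime dividing
`lcm(d₁,…,d_m)`. If `d ∈ 𝒜` with `pk ∣ d`, and `pi` is a prime with `pi ∣ d` and
`(pi, d) ≠ (2,6)`, then `d / pi ∈ 𝒜`. -/
theorem stmt_13 (m : ℕ) (dfun : Fin m → ℕ) (e : Fin m → ℕ)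
    (hd : ∀ i, 0 < dfun i) (hdinj : Function.Injective dfun) (he : ∀ i, 0 < e i)
    (h : Polynomial ℤ) (hh : h = ∏ i, (cyclotomic (dfun i) ℤ) ^ (e i))
    (hdvd : ∀ p : ℕ, p.Prime → h.eval (p : ℤ) ∣ h.eval ((p : ℤ) ^ p))
    (pk : ℕ) (hpk : pk.Prime) (hpkdvd : pk ∣ Finset.univ.lcm dfun)
    (hpkmax : ∀ q : ℕ, q.Prime → q ∣ Finset.univ.lcm dfun → q ≤ pk)
    (d : ℕ) (hdA : ∃ i, dfun i = d) (hpkd : pk ∣ d)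
    (pi : ℕ) (hpi : pi.Prime) (hpid : pi ∣ d) (hpi26 : ¬(pi = 2 ∧ d = 6)) :
    ∃ j, dfun j = d / pi :=
  stmt_13_general m dfun e he h hh hdvd pk hpkmax d hdA hpkd pi hpi hpid hpi26
end

section
/- Let f ∈ ℤ[x] be a monic polynomial with f(p) ∣ f(p^p) for every prime p ≥ N (for some positive integer N), and write f(x) = x^{a₀} · p₁(x)^{a₁} ⋯ p_m(x)^{a_m} with p₁,…,p_m distinct monic irreducible polynomials in ℤ[x] different from x, and set g(x) = p₁(x) p₂(x) ⋯ p_m(x). Then g is monic, has nonzero discriminant (is squarefree), g(0) ≠ 0, and for every prime p ≥ max{N, |g(0)|} and every prime q, q ∣ g(p) implies q ∣ g(p^p) (equivalently rad(g(p)) ∣ g(p^p)). -/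
open Polynomial

set_option maxHeartbeats 800000 in
set_option synthInstance.maxHeartbeats 200000 in

/-- Let `f ∈ ℤ[x]` be monic with `f(p) ∣ f(p^p)` for all primes `p ≥ N`
(`N` a positive integer), and write `f = x^{a₀} · P₁^{a₁} ⋯ P_m^{a_m}` with `P₁, …, P_m`
distinct monic irreducible polynomials different from `x`, and set `g = P₁ P₂ ⋯ P_m`. Then
`g` is monic, squarefree (nonzero discriminant), `g(0) ≠ 0`, and for every prime
`p ≥ max{N, |g(0)|}` and every prime `q`, `q ∣ g(p)` implies `q ∣ g(p^p)`. -/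
theorem stmt_15 (f : Polynomial ℤ) (hf : f.Monic) (N : ℕ) (hN : 0 < N)
    (hdvd : ∀ p : ℕ, p.Prime → N ≤ p → f.eval (p : ℤ) ∣ f.eval ((p : ℤ) ^ p))
    (m a₀ : ℕ) (P : Fin m → Polynomial ℤ) (a : Fin m → ℕ)
    (hPmonic : ∀ i, (P i).Monic) (hPirr : ∀ i, Irreducible (P i))
    (hPX : ∀ i, P i ≠ X) (hPinj : Function.Injective P) (ha : ∀ i, 0 < a i)
    (hfac : f = X ^ a₀ * ∏ i, (P i) ^ (a i))
    (g : Polynomial ℤ) (hg : g = ∏ i, P i) :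
    g.Monic ∧ Squarefree g ∧ g.eval 0 ≠ 0 ∧
      ∀ p : ℕ, p.Prime → max N (g.eval 0).natAbs ≤ p → ∀ q : ℕ, q.Prime →
        (q : ℤ) ∣ g.eval (p : ℤ) → (q : ℤ) ∣ g.eval ((p : ℤ) ^ p) := by
  have hPprime : ∀ i, Prime (P i) := fun i =>
    (UniqueFactorizationMonoid.irreducible_iff_prime).mp (hPirr i)
  -- each `P i` has nonzero constant term
  have hP0 : ∀ i, (P i).eval 0 ≠ 0 := by
    intro i h0
    have hx : X ∣ P i := by
      have := (dvd_iff_isRoot (p := P i) (a := 0)).mpr h0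
      simpa using this
    have hassoc : Associated X (P i) := irreducible_X.associated_of_dvd (hPirr i) hx
    exact hPX i (eq_of_monic_of_associated (hPmonic i) monic_X hassoc.symm)
  -- monicity of g
  have hgm : g.Monic := by
    rw [hg]; exact monic_prod_of_monic _ _ fun i _ => hPmonic i
  -- squarefreeness
  have hsf : ∀ s : Finset (Fin m), Squarefree (∏ i ∈ s, P i) := by
    intro s
    induction s using Finset.induction_on with
    | empty => simpa using squarefree_one
    | @insert i s hi ih =>
      rw [Finset.prod_insert hi, squarefree_mul_iff]
      refine ⟨?_, (hPirr i).squarefree, ih⟩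
      intro d hdi hds
      by_contra hd
      obtain ⟨e, he⟩ := hdi
      rcases (hPirr i).isUnit_or_isUnit he with hu | hu
      · exact hd hu
      · have hPd : P i ∣ d := by
          obtain ⟨u, rfl⟩ := hu
          exact ⟨(u⁻¹ : (Polynomial ℤ)ˣ), by rw [he, mul_assoc, Units.mul_inv, mul_one]⟩
        have hPid : P i ∣ ∏ j ∈ s, P j := hPd.trans hds
        obtain ⟨j, hj, hij⟩ := ((hPprime i).dvd_finset_prod_iff _).mp hPid
        have : P i = P j :=
          eq_of_monic_of_associated (hPmonic i) (hPmonic j)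
            ((hPirr i).associated_of_dvd (hPirr j) hij)
        exact hi (hPinj this ▸ hj)
  have hgsf : Squarefree g := by rw [hg]; exact hsf Finset.univ
  -- g(0) ≠ 0
  have hg0 : g.eval 0 ≠ 0 := by
    rw [hg, eval_prod]
    exact Finset.prod_ne_zero_iff.mpr fun i _ => hP0 i
  refine ⟨hgm, hgsf, hg0, ?_⟩
  intro p hp hple q hq hqg
  have hNp : N ≤ p := le_trans (le_max_left _ _) hple
  have hqprime : Prime (q : ℤ) := Nat.prime_iff_prime_int.mp hq
  by_cases hqp : (q : ℤ) ∣ (p : ℤ)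
  · -- then q = p and p ∣ g(0), hence p ∣ g(p^p)
    have h1 : (q : ℤ) ∣ g.eval (p : ℤ) - g.eval 0 :=
      dvd_trans (by simpa using hqp) (by simpa using sub_dvd_eval_sub (p : ℤ) 0 g)
    have h2 : (q : ℤ) ∣ g.eval 0 := (dvd_sub_right hqg).mp h1
    have h3 : (q : ℤ) ∣ g.eval ((p : ℤ) ^ p) - g.eval 0 := by
      refine dvd_trans ?_ (by simpa using sub_dvd_eval_sub ((p : ℤ) ^ p) 0 g)
      exact hqp.trans (dvd_pow_self _ hp.pos.ne')
    simpa using dvd_add h3 h2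
  · -- q doesn't divide p
    obtain ⟨i, -, hi⟩ := (hqprime.dvd_finset_prod_iff _).mp
      (by rw [hg, eval_prod] at hqg; exact hqg)
    have hfp : (q : ℤ) ∣ f.eval (p : ℤ) := by
      refine hi.trans ?_
      rw [hfac, eval_mul, eval_prod]
      simp only [eval_pow, eval_X]
      refine dvd_mul_of_dvd_right ?_ _
      exact (dvd_pow_self _ (ha i).ne').trans
        (Finset.dvd_prod_of_mem (fun j => ((P j).eval (p:ℤ)) ^ (a j)) (Finset.mem_univ i))
    have hfpp : (q : ℤ) ∣ f.eval ((p : ℤ) ^ p) := hfp.trans (hdvd p hp hNp)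
    rw [hfac, eval_mul, eval_prod] at hfpp
    simp only [eval_pow, eval_X] at hfpp
    rcases hqprime.dvd_mul.mp hfpp with h | h
    · exfalso
      exact hqp (hqprime.dvd_of_dvd_pow (hqprime.dvd_of_dvd_pow h))
    · obtain ⟨j, -, hj⟩ := (hqprime.dvd_finset_prod_iff _).mp h
      have := hqprime.dvd_of_dvd_pow hj
      rw [hg, eval_prod]
      exact this.trans (Finset.dvd_prod_of_mem _ (Finset.mem_univ j))
end
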